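/- arXiv:2303.10622 — 4 statements merged into one kernel-verified Lean document; each statement's English description precedes it below -/
import Mathlib

section
/- Let u : ℕ → [0,1) be a sequence of real numbers. For an integer s ≥ 1, say that the overlapping s-blocks of u are uniformly distributed if for every t = (t_1, …, t_s) ∈ (0,1]^s, the proportion (1/N)·#{0 ≤ i < N : u_{i+j} < t_{j+1} for all 0 ≤ j ≤ s−1} converges to ∏_{j=1}^{s} t_j as N → ∞; say that the non-overlapping s-blocks of u are uniformly distributed if the same holds with the blocks (u_{is}, u_{is+1}, …, u_{is+s−1}), i.e., for every t ∈ (0,1]^s the proportion (1/N)·#{0 ≤ i < N : u_{is+j} < t_{j+1} for all 0 ≤ j ≤ s−1} converges to ∏_{j=1}^{s} t_j. Then the overlapping s-blocks of u are uniformly distributed for every dimension s ≥ 1 (i.e., u is completely uniformly distributed) if and only if the non-overlapping s-blocks of u are uniformly distributed for every dimension s ≥ 1. -/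
open Finset Filter Topology
open scoped Classical

namespace Chentsov

noncomputable def ind (P : ℕ → Prop) : ℕ → ℝ := fun i => if P i then 1 else 0

lemma ind_nonneg (P : ℕ → Prop) (i : ℕ) : 0 ≤ ind P i := by
  unfold ind; split <;> norm_num

lemma ind_le_one (P : ℕ → Prop) (i : ℕ) : ind P i ≤ 1 := by
  unfold ind; split <;> norm_num

lemma ind_congr {P Q : ℕ → Prop} (h : ∀ i, P i ↔ Q i) : ind P = ind Q := by
  funext i; unfold ind; simp only [h i]

lemma ind_and (P Q : ℕ → Prop) (i : ℕ) :
    ind (fun m => P m ∧ Q m) i = ind P i * ind Q i := by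
  unfold ind
  by_cases h1 : P i <;> by_cases h2 : Q i <;> simp [h1, h2]

lemma card_eq_sum_ind (P : ℕ → Prop) (N : ℕ) :
    (Nat.card {i : ℕ // i < N ∧ P i} : ℝ) = ∑ i ∈ range N, ind P i := by
  have e : {i : ℕ // i < N ∧ P i} ≃ {x // x ∈ (range N).filter P} :=
    Equiv.subtypeEquivRight (by intro x; simp [Finset.mem_filter])
  rw [Nat.card_congr e, Nat.card_eq_finsetCard, Finset.card_filter]
  push_cast
  unfold ind
  norm_num

lemma sum_shift (f : ℕ → ℝ) (k N : ℕ) :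
    ∑ i ∈ range N, f (i + k) = (∑ i ∈ range (N + k), f i) - ∑ i ∈ range k, f i := by
  have h1 : ∑ i ∈ Finset.Ico k (N + k), f i = ∑ i ∈ range N, f (i + k) := by
    rw [Finset.sum_Ico_eq_sum_range]
    simp [Nat.add_sub_cancel, add_comm]
  rw [← h1, Finset.sum_Ico_eq_sub f (Nat.le_add_left k N)]

lemma tendsto_nat_div_add_atTop (k : ℕ) :
    Tendsto (fun N : ℕ => ((N + k : ℕ) : ℝ) / N) atTop (𝓝 1) := by
  have h : ∀ᶠ N : ℕ in atTop, ((N + k : ℕ) : ℝ) / N = 1 + (k : ℝ) * (1 / N) := by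
    filter_upwards [eventually_gt_atTop 0] with N hN
    have : (N : ℝ) ≠ 0 := by positivity
    push_cast
    field_simp
  rw [tendsto_congr' h]
  have h1 := tendsto_one_div_atTop_nhds_zero_nat.const_mul (k : ℝ)
  have h2 := (tendsto_const_nhds (x := (1:ℝ)) (f := atTop (α := ℕ))).add h1
  simpa using h2

lemma tendsto_avg_shift {f : ℕ → ℝ} {a : ℝ} (k : ℕ)
    (h : Tendsto (fun N => (∑ i ∈ range N, f i) / N) atTop (𝓝 a)) :
    Tendsto (fun N => (∑ i ∈ range N, f (i + k)) / N) atTop (𝓝 a) := by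
  have h1 : Tendsto (fun N : ℕ => (∑ i ∈ range (N + k), f i) / ((N + k : ℕ) : ℝ)) atTop (𝓝 a) :=
    h.comp (tendsto_add_atTop_nat k)
  have h2 := h1.mul (tendsto_nat_div_add_atTop k)
  have h3 : Tendsto (fun N : ℕ => (∑ i ∈ range k, f i) * (1 / N)) atTop (𝓝 0) := by
    simpa using tendsto_one_div_atTop_nhds_zero_nat.const_mul (∑ i ∈ range k, f i)
  have h4 := h2.sub h3
  rw [mul_one, sub_zero] at h4
  apply h4.congr'
  filter_upwards [eventually_gt_atTop 0] with N hN
  have hN0 : (N : ℝ) ≠ 0 := by positivity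
  have hNk : ((N + k : ℕ) : ℝ) ≠ 0 := by positivity
  rw [sum_shift]
  field_simp

lemma tendsto_avg_const (c : ℝ) :
    Tendsto (fun N : ℕ => (∑ _i ∈ range N, c) / N) atTop (𝓝 c) := by
  have h : ∀ᶠ N : ℕ in atTop, (∑ _i ∈ range N, c) / N = c := by
    filter_upwards [eventually_gt_atTop 0] with N hN
    have : (N : ℝ) ≠ 0 := by positivity
    rw [Finset.sum_const, Finset.card_range, nsmul_eq_mul]
    field_simp
  rw [tendsto_congr' h]
  exact tendsto_const_nhds



lemma prod_eq_window {f : ℕ → ℝ} {a b n : ℕ} (hbn : b ≤ n)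
    (h1 : ∀ j, j < a → f j = 1) (h2 : ∀ j, b ≤ j → f j = 1) :
    ∏ j ∈ range n, f j = ∏ j ∈ Finset.Ico a b, f j := by
  refine (Finset.prod_subset ?_ ?_).symm
  · intro x hx
    simp only [Finset.mem_Ico] at hx
    simp only [Finset.mem_range]
    omega
  · intro x hx hnx
    simp only [Finset.mem_Ico] at hnx
    simp only [Finset.mem_range] at hx
    rcases lt_or_ge x a with h | h
    · exact h1 x h
    · exact h2 x (by omega)

section Main
variable (u : ℕ → ℝ) {s : ℕ} (t : Fin s → ℝ)

def Ev (m : ℕ) : Prop := ∀ j : Fin s, u (m + (j : ℕ)) < t j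

noncomputable def tExt : ℕ → ℝ := fun j => if h : j < s then t ⟨j, h⟩ else 1

lemma tExt_mem (ht : ∀ j, t j ∈ Set.Ioc (0:ℝ) 1) (j : ℕ) : tExt t j ∈ Set.Ioc (0:ℝ) 1 := by
  unfold tExt
  split
  · exact ht _
  · norm_num

lemma tExt_eq_one {j : ℕ} (h : s ≤ j) : tExt t j = 1 := by
  unfold tExt
  rw [dif_neg (by omega)]

lemma tExt_lt (m j : ℕ) (hj : j < s) : (u m < tExt t j ↔ u m < t ⟨j, hj⟩) := by
  unfold tExt
  rw [dif_pos hj]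

lemma prod_range_tExt {n : ℕ} (hn : s ≤ n) : ∏ j ∈ range n, tExt t j = ∏ j, t j := by
  rw [prod_eq_window (a := 0) (b := s) hn (by omega) (fun j hj => tExt_eq_one t hj)]
  rw [show Finset.Ico 0 s = range s from Finset.range_eq_Ico s |>.symm]
  rw [← Fin.prod_univ_eq_prod_range (fun j => tExt t j) s]
  exact Finset.prod_congr rfl (fun j _ => by unfold tExt; rw [dif_pos j.isLt])


/-- Window function for non-overlapping blocks: `t` placed at offsets `[r, r+s)`. -/
noncomputable def tWin (r : ℕ) : ℕ → ℝ := fun j => if r ≤ j then tExt t (j - r) else 1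

lemma tWin_mem (ht : ∀ j, t j ∈ Set.Ioc (0:ℝ) 1) (r j : ℕ) : tWin t r j ∈ Set.Ioc (0:ℝ) 1 := by
  unfold tWin
  split
  · exact tExt_mem t ht _
  · norm_num

lemma prod_tWin {r D : ℕ} (hrD : r + s ≤ D) :
    ∏ j ∈ range D, tWin t r j = ∏ j, t j := by
  rw [prod_eq_window (a := r) (b := r + s) hrD
      (fun j hj => by unfold tWin; rw [if_neg (by omega)])
      (fun j hj => by unfold tWin; rw [if_pos (by omega), tExt_eq_one t (by omega)])]
  rw [Finset.prod_Ico_eq_prod_range]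
  have : ∀ i ∈ range (r + s - r), tWin t r (r + i) = tExt t i := by
    intro i _
    unfold tWin
    rw [if_pos (by omega)]
    congr 1
    omega
  rw [Finset.prod_congr rfl this, show r + s - r = s from by omega]
  exact prod_range_tExt t le_rfl

lemma ev_tWin_iff (hu : ∀ i, u i ∈ Set.Ico (0:ℝ) 1) {r D : ℕ} (hrD : r + s ≤ D) (m : ℕ) :
    (∀ j : Fin D, u (m + (j : ℕ)) < tWin t r j) ↔ Ev u t (m + r) := by
  constructor
  · intro h j
    have hjD : r + (j : ℕ) < D := by omega
    have := h ⟨r + j, hjD⟩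
    simp only [tWin] at this
    rw [if_pos (by omega : r ≤ r + (j:ℕ))] at this
    have h2 : r + (j:ℕ) - r = (j:ℕ) := by omega
    rw [h2] at this
    rw [(tExt_lt u t _ _ j.isLt)] at this
    rw [show m + (r + (j:ℕ)) = m + r + (j:ℕ) from by omega] at this
    exact this
  · intro h j
    unfold tWin
    split
    · rename_i hrj
      rcases lt_or_ge ((j : ℕ) - r) s with hjs | hjs
      · rw [tExt_lt u t _ _ hjs]
        have := h ⟨(j:ℕ) - r, hjs⟩
        rw [show m + r + ((j:ℕ) - r) = m + (j:ℕ) from by omega] at this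
        exact this
      · rw [tExt_eq_one t hjs]
        exact (hu _).2
    · exact (hu _).2

/-- Window function for pair correlations: `t` at `[0,s)` and at `[d*s, d*s+s)`. -/
noncomputable def tPair (d : ℕ) : ℕ → ℝ := fun j => tExt t j * tWin t (d * s) j

lemma tPair_mem (ht : ∀ j, t j ∈ Set.Ioc (0:ℝ) 1) (d j : ℕ) : tPair t d j ∈ Set.Ioc (0:ℝ) 1 := by
  have h1 := tExt_mem t ht j
  have h2 := tWin_mem t ht (d * s) j
  constructor
  · exact mul_pos h1.1 h2.1
  · show tExt t j * tWin t (d*s) j ≤ 1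
    nlinarith [h1.1, h1.2, h2.1, h2.2]

lemma prod_tPair {d : ℕ} (hd : 1 ≤ d) (hs : 1 ≤ s) :
    ∏ j ∈ range ((d+1) * s), tPair t d j = (∏ j, t j) * (∏ j, t j) := by
  unfold tPair
  rw [Finset.prod_mul_distrib]
  rw [prod_range_tExt t (by nlinarith), prod_tWin t (by nlinarith : d * s + s ≤ (d+1)*s)]

lemma ev_tPair_iff (hu : ∀ i, u i ∈ Set.Ico (0:ℝ) 1) {d : ℕ} (hd : 1 ≤ d) (hs : 1 ≤ s) (m : ℕ) :
    (∀ j : Fin ((d+1) * s), u (m + (j : ℕ)) < tPair t d j) ↔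
      (Ev u t m ∧ Ev u t (m + d * s)) := by
  have hds : s ≤ d * s := by nlinarith
  constructor
  · intro h
    constructor
    · intro j
      have hj : (j : ℕ) < (d+1) * s := by nlinarith [j.isLt]
      have := h ⟨j, hj⟩
      simp only [tPair, tWin] at this
      rw [if_neg (by omega : ¬ d * s ≤ (j:ℕ))] at this
      rw [mul_one] at this
      rw [tExt_lt u t _ _ j.isLt] at this
      exact this
    · intro j
      have hj : d * s + (j : ℕ) < (d+1) * s := by
        have := j.isLt; nlinarith
      have := h ⟨d * s + j, hj⟩
      simp only [tPair, tWin] at this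
      rw [tExt_eq_one t (by omega : s ≤ d * s + (j:ℕ)), one_mul,
        if_pos (by omega : d * s ≤ d * s + (j:ℕ)),
        show d * s + (j:ℕ) - d * s = (j:ℕ) from by omega,
        tExt_lt u t _ _ j.isLt,
        show m + (d * s + (j:ℕ)) = m + d * s + (j:ℕ) from by omega] at this
      exact this
  · rintro ⟨h1, h2⟩ j
    unfold tPair tWin
    rcases lt_or_ge ((j:ℕ)) s with hjs | hjs
    · rw [if_neg (by omega : ¬ d * s ≤ (j:ℕ)), mul_one, tExt_lt u t _ _ hjs]
      exact h1 ⟨j, hjs⟩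
    · rw [tExt_eq_one t hjs, one_mul]
      split
      · rename_i hdj
        rcases lt_or_ge ((j:ℕ) - d * s) s with hjs2 | hjs2
        · rw [tExt_lt u t _ _ hjs2]
          have := h2 ⟨(j:ℕ) - d * s, hjs2⟩
          rw [show m + d * s + ((j:ℕ) - d * s) = m + (j:ℕ) from by omega] at this
          exact this
        · rw [tExt_eq_one t hjs2]
          exact (hu _).2
      · exact (hu _).2

end Main


lemma abs_sum_shift {h : ℕ → ℝ} (hb : ∀ i, |h i| ≤ 1) (Q j : ℕ) :
    |(∑ q ∈ range Q, h (q + j)) - ∑ q ∈ range Q, h q| ≤ 2 * j := by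
  induction j with
  | zero => simp
  | succ j ih =>
    have step : (∑ q ∈ range Q, h (q + (j+1))) - ∑ q ∈ range Q, h (q + j)
        = h (Q + j) - h j := by
      have e1 : ∀ q, h (q + (j+1)) = (fun q => h (q + j)) (q + 1) := by
        intro q; congr 1; omega
      calc (∑ q ∈ range Q, h (q + (j+1))) - ∑ q ∈ range Q, h (q + j)
          = (∑ q ∈ range Q, (fun q => h (q + j)) (q + 1)) - ∑ q ∈ range Q, h (q + j) := by
            rw [Finset.sum_congr rfl (fun q _ => e1 q)]
        _ = h (Q + j) - h j := by
            have := Finset.sum_range_succ' (fun q => h (q + j)) Q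
            -- ∑_{q < Q+1} h (q+j) = ∑_{q < Q} h (q+1+j) + h (0 + j)
            have h2 := Finset.sum_range_succ (fun q => h (q + j)) Q
            simp only [zero_add] at this
            -- this : ∑ q in range (Q+1), h (q+j) = (∑ q in range Q, h (q+1+j)) + h j
            rw [h2] at this
            -- (∑ q in range Q, h (q+j)) + h (Q+j) = (∑ q in range Q, h (q+1+j)) + h j
            linarith [this]
    have : (∑ q ∈ range Q, h (q + (j+1))) - ∑ q ∈ range Q, h q
        = ((∑ q ∈ range Q, h (q + j)) - ∑ q ∈ range Q, h q) + (h (Q + j) - h j) := by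
      linarith [step]
    rw [this]
    have b1 := hb (Q + j)
    have b2 := hb j
    have := abs_add_le (((∑ q ∈ range Q, h (q + j)) - ∑ q ∈ range Q, h q)) (h (Q + j) - h j)
    have habs : |h (Q + j) - h j| ≤ 2 := by
      rw [abs_le] at b1 b2 ⊢; constructor <;> linarith [b1.1, b1.2, b2.1, b2.2]
    push_cast
    linarith [ih]


section FwdSec

lemma ind_precomp (P : ℕ → Prop) (g : ℕ → ℕ) :
    ind (fun m => P (g m)) = fun i => ind P (g i) := by
  funext i
  unfold ind
  exact if_congr Iff.rfl rfl rfl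


theorem tendsto_card_div_iff (P : ℕ → Prop) (a : ℝ) :
    Tendsto (fun N : ℕ => ((Nat.card {i : ℕ // i < N ∧ P i} : ℕ) : ℝ) / N) atTop (𝓝 a) ↔
    Tendsto (fun N : ℕ => (∑ i ∈ range N, ind P i) / N) atTop (𝓝 a) := by
  have heq : (fun N : ℕ => ((Nat.card {i : ℕ // i < N ∧ P i} : ℕ) : ℝ) / N)
      = fun N : ℕ => (∑ i ∈ range N, ind P i) / N :=
    funext fun N => by rw [card_eq_sum_ind]
  rw [heq]

set_option maxHeartbeats 2000000 in
theorem forward (u : ℕ → ℝ) (hu : ∀ i, u i ∈ Set.Ico (0:ℝ) 1)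
    (H : ∀ s : ℕ, 1 ≤ s → ∀ t : Fin s → ℝ, (∀ j, t j ∈ Set.Ioc (0 : ℝ) 1) →
      Tendsto (fun N : ℕ =>
        ((Nat.card {i : ℕ // i < N ∧ ∀ j : Fin s, u (i + (j : ℕ)) < t j} : ℕ) : ℝ) / N)
        atTop (𝓝 (∏ j, t j)))
    {s : ℕ} (hs : 1 ≤ s) (t : Fin s → ℝ) (ht : ∀ j, t j ∈ Set.Ioc (0:ℝ) 1) :
    Tendsto (fun N : ℕ =>
      ((Nat.card {i : ℕ // i < N ∧ ∀ j : Fin s, u (i * s + (j : ℕ)) < t j} : ℕ) : ℝ) / N)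
      atTop (𝓝 (∏ j, t j)) := by
  set v : ℝ := ∏ j, t j with hv
  set y : ℕ → ℝ := ind (Ev u t) with hy
  have hv0 : 0 < v := Finset.prod_pos (fun j _ => (ht j).1)
  have hv1 : v ≤ 1 := Finset.prod_le_one (fun j _ => (ht j).1.le) (fun j _ => (ht j).2)
  have hyb : ∀ m, 0 ≤ y m ∧ y m ≤ 1 := fun m => ⟨ind_nonneg _ m, ind_le_one _ m⟩
  -- Step A
  have stepA : ∀ a : ℕ, Tendsto (fun N : ℕ => (∑ m ∈ range N, y (m + a)) / N) atTop (𝓝 v) := by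
    intro a
    apply tendsto_avg_shift
    have h0 := (tendsto_card_div_iff (fun i => ∀ j : Fin s, u (i + (j : ℕ)) < t j) v).1
      (H s hs t ht)
    have hEv : (fun i => ∀ j : Fin s, u (i + (j : ℕ)) < t j) = Ev u t := rfl
    rw [hEv] at h0
    exact h0
  -- Step B
  have stepB : ∀ d : ℕ, 1 ≤ d → ∀ a : ℕ,
      Tendsto (fun N : ℕ => (∑ m ∈ range N, y (m + a) * y (m + a + d * s)) / N)
        atTop (𝓝 (v * v)) := by
    intro d hd a
    apply tendsto_avg_shift (f := fun m => y m * y (m + d * s))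
    have hbig := H ((d+1)*s) (by nlinarith) (fun j : Fin ((d+1)*s) => tPair t d (j : ℕ))
      (fun j => tPair_mem t ht d (j : ℕ))
    rw [tendsto_card_div_iff] at hbig
    have hprod : (∏ j : Fin ((d+1)*s), tPair t d (j:ℕ)) = v * v := by
      rw [Fin.prod_univ_eq_prod_range (fun j => tPair t d j) ((d+1)*s)]
      exact prod_tPair t hd hs
    rw [hprod] at hbig
    have hind : ind (fun i => ∀ j : Fin ((d+1)*s), u (i + (j:ℕ)) < tPair t d (j:ℕ))
        = fun m => y m * y (m + d * s) := by
      have h1 : ind (fun i => ∀ j : Fin ((d+1)*s), u (i + (j:ℕ)) < tPair t d (j:ℕ))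
          = ind (fun m => Ev u t m ∧ Ev u t (m + d*s)) :=
        ind_congr (fun m => ev_tPair_iff u t hu hd hs m)
      have e2 : ind (fun m => Ev u t (m + d * s)) = fun m => ind (Ev u t) (m + d * s) :=
        ind_precomp (Ev u t) (fun m => m + d * s)
      funext m
      simp only [h1, ind_and, e2, hy]
    rw [hind] at hbig
    exact hbig
  set c : ℕ → ℝ := fun m => y m - v with hc
  have hcb : ∀ m, |c m| ≤ 1 := by
    intro m
    rw [abs_le]
    have := hyb m
    constructor <;> simp only [hc] <;> linarith [this.1, this.2]
  -- Step C
  have stepC : ∀ d : ℕ, 1 ≤ d → ∀ a : ℕ,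
      Tendsto (fun N : ℕ => (∑ m ∈ range N, c (m + a) * c (m + a + d * s)) / N)
        atTop (𝓝 0) := by
    intro d hd a
    have T1 := stepB d hd a
    have T2 := (stepA a).const_mul v
    have T3 := (stepA (a + d * s)).const_mul v
    simp only [show ∀ m : ℕ, m + (a + d * s) = m + a + d * s from fun m => by omega] at T3
    have T4 := tendsto_avg_const (v * v)
    have comb := ((T1.sub T2).sub T3).add T4
    rw [show v * v - v * v - v * v + v * v = (0:ℝ) from by ring] at comb
    apply comb.congr
    intro N
    have key : (∑ m ∈ range N, y (m+a) * y (m+a+d*s)) - v * (∑ m ∈ range N, y (m+a))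
        - v * (∑ m ∈ range N, y (m+a+d*s)) + (∑ _m ∈ range N, v*v)
        = ∑ m ∈ range N, c (m+a) * c (m+a+d*s) := by
      rw [Finset.mul_sum, Finset.mul_sum, ← Finset.sum_sub_distrib, ← Finset.sum_sub_distrib,
        ← Finset.sum_add_distrib]
      apply Finset.sum_congr rfl
      intro m _
      simp only [hc]
      ring
    rw [← key]
    ring
  -- Step D
  have stepD : Tendsto (fun Q : ℕ => (∑ q ∈ range Q, c (q * s)) / Q) atTop (𝓝 0) := by
    rw [Metric.tendsto_atTop]
    intro ε hε
    obtain ⟨L, hL⟩ := exists_nat_gt (max 1 (8 * s / ε ^ 2))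
    have hL1 : 1 ≤ L := by
      by_contra hcon
      push_neg at hcon
      interval_cases L
      · simp at hL
        linarith [le_max_left (1:ℝ) (8 * s / ε ^ 2), hL]
    have hLpos : (0:ℝ) < L := by exact_mod_cast hL1
    have hLr : (8:ℝ) * s / ε^2 < L := lt_of_le_of_lt (le_max_right _ _) hL
    set T : ℕ → ℝ := fun m => ∑ j ∈ range L, c (m + j * s) with hT
    set F : ℕ → ℝ := fun M => ∑ m ∈ range M, (T m)^2 with hF
    have hsplit : ∀ M, F M
        = ∑ j ∈ range L, ∑ j' ∈ range L, ∑ m ∈ range M, c (m + j*s) * c (m + j'*s) := by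
      intro M
      have e1 : ∀ m, (T m)^2 = ∑ j ∈ range L, ∑ j' ∈ range L, c (m + j*s) * c (m + j'*s) := by
        intro m
        simp only [hT, sq, Finset.sum_mul_sum]
      calc F M = ∑ m ∈ range M, ∑ j ∈ range L, ∑ j' ∈ range L, c (m+j*s) * c (m+j'*s) :=
            Finset.sum_congr rfl (fun m _ => e1 m)
        _ = ∑ j ∈ range L, ∑ m ∈ range M, ∑ j' ∈ range L, c (m+j*s) * c (m+j'*s) :=
            Finset.sum_comm
        _ = ∑ j ∈ range L, ∑ j' ∈ range L, ∑ m ∈ range M, c (m+j*s) * c (m+j'*s) :=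
            Finset.sum_congr rfl (fun j _ => Finset.sum_comm)
    -- off-diagonal tendsto
    have hterm : ∀ j j' : ℕ, j ≠ j' →
        Tendsto (fun M : ℕ => (∑ m ∈ range M, c (m + j*s) * c (m + j'*s)) / M)
          atTop (𝓝 0) := by
      have base : ∀ j j' : ℕ, j < j' →
          Tendsto (fun M : ℕ => (∑ m ∈ range M, c (m + j*s) * c (m + j'*s)) / M)
            atTop (𝓝 0) := by
        intro j j' hjj
        have hd1 : 1 ≤ j' - j := by omega
        have h0 := stepC (j' - j) hd1 (j * s)
        have harith : ∀ m, m + j*s + (j' - j)*s = m + j'*s := by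
          intro m
          rw [add_assoc, ← add_mul]
          congr 2
          omega
        simp only [harith] at h0
        exact h0
      intro j j' hne
      rcases lt_or_gt_of_ne hne with h | h
      · exact base j j' h
      · have h0 := base j' j h
        apply h0.congr
        intro M
        congr 1
        exact Finset.sum_congr rfl (fun m _ => by ring)
    have hoffd : Tendsto (fun M : ℕ =>
        ∑ p ∈ (range L ×ˢ range L).filter (fun p => ¬ p.1 = p.2),
          (∑ m ∈ range M, c (m + p.1*s) * c (m + p.2*s)) / M) atTop (𝓝 0) := by
      have h0 := tendsto_finset_sum ((range L ×ˢ range L).filter (fun p => ¬ p.1 = p.2))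
        (fun p hp => by
          simp only [Finset.mem_filter] at hp
          exact hterm p.1 p.2 hp.2)
      simpa using h0
    have h1 : ∀ᶠ M : ℕ in atTop, (∑ p ∈ (range L ×ˢ range L).filter (fun p => ¬ p.1 = p.2),
        (∑ m ∈ range M, c (m + p.1*s) * c (m + p.2*s)) / M) < L :=
      hoffd.eventually_lt_const hLpos
    have hFbound : ∀ᶠ M : ℕ in atTop, F M ≤ 2 * L * M := by
      filter_upwards [h1, eventually_ge_atTop 1] with M hM1 hM2
      have hMpos : (0:ℝ) < M := by exact_mod_cast hM2
      have hdecomp : F M = (∑ p ∈ (range L ×ˢ range L).filter (fun p => p.1 = p.2),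
            ∑ m ∈ range M, c (m + p.1*s) * c (m + p.2*s))
          + ∑ p ∈ (range L ×ˢ range L).filter (fun p => ¬ p.1 = p.2),
            ∑ m ∈ range M, c (m + p.1*s) * c (m + p.2*s) := by
        rw [hsplit M, ← Finset.sum_product']
        exact (Finset.sum_filter_add_sum_filter_not (range L ×ˢ range L)
          (fun p => p.1 = p.2) _).symm
      have hdiag : (∑ p ∈ (range L ×ˢ range L).filter (fun p => p.1 = p.2),
          ∑ m ∈ range M, c (m + p.1*s) * c (m + p.2*s)) ≤ L * M := by
        have hcard : ((range L ×ˢ range L).filter (fun p => p.1 = p.2)).card ≤ L := by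
          have : (range L ×ˢ range L).filter (fun p => p.1 = p.2)
              ⊆ (range L).image (fun j => (j, j)) := by
            intro p hp
            simp only [Finset.mem_filter, Finset.mem_product, Finset.mem_range] at hp
            simp only [Finset.mem_image, Finset.mem_range]
            exact ⟨p.1, hp.1.1, Prod.ext rfl hp.2⟩
          calc ((range L ×ˢ range L).filter (fun p => p.1 = p.2)).card
              ≤ ((range L).image (fun j => (j, j))).card := Finset.card_le_card this
            _ ≤ L := le_trans Finset.card_image_le (by simp)
        calc (∑ p ∈ (range L ×ˢ range L).filter (fun p => p.1 = p.2),
              ∑ m ∈ range M, c (m + p.1*s) * c (m + p.2*s))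
            ≤ ∑ p ∈ (range L ×ˢ range L).filter (fun p => p.1 = p.2), (M:ℝ) := by
              apply Finset.sum_le_sum
              intro p _
              calc ∑ m ∈ range M, c (m + p.1*s) * c (m + p.2*s)
                  ≤ ∑ m ∈ range M, 1 := by
                    apply Finset.sum_le_sum
                    intro m _
                    have b1 := abs_le.1 (hcb (m + p.1*s))
                    have b2 := abs_le.1 (hcb (m + p.2*s))
                    nlinarith [b1.1, b1.2, b2.1, b2.2]
                _ = M := by simp
          _ = ((range L ×ˢ range L).filter (fun p => p.1 = p.2)).card * (M:ℝ) := by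
              rw [Finset.sum_const, nsmul_eq_mul]
          _ ≤ L * M := by
              apply mul_le_mul_of_nonneg_right _ hMpos.le
              exact_mod_cast hcard
      have hoff2 : (∑ p ∈ (range L ×ˢ range L).filter (fun p => ¬ p.1 = p.2),
          ∑ m ∈ range M, c (m + p.1*s) * c (m + p.2*s)) ≤ L * M := by
        have : (∑ p ∈ (range L ×ˢ range L).filter (fun p => ¬ p.1 = p.2),
            ∑ m ∈ range M, c (m + p.1*s) * c (m + p.2*s))
            = (∑ p ∈ (range L ×ˢ range L).filter (fun p => ¬ p.1 = p.2),
              (∑ m ∈ range M, c (m + p.1*s) * c (m + p.2*s)) / M) * M := by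
          rw [Finset.sum_mul]
          apply Finset.sum_congr rfl
          intro p _
          rw [div_mul_cancel₀ _ hMpos.ne']
        rw [this]
        apply mul_le_mul_of_nonneg_right hM1.le hMpos.le
      calc F M ≤ L * M + L * M := by rw [hdecomp]; exact add_le_add hdiag hoff2
        _ = 2 * L * M := by ring
    obtain ⟨M₀, hM₀⟩ := eventually_atTop.1 hFbound
    obtain ⟨K, hK⟩ := exists_nat_gt (4 * L / ε)
    refine ⟨max (max 1 M₀) K, fun Q hQ => ?_⟩
    have hQ1 : 1 ≤ Q := le_trans (le_trans (le_max_left 1 M₀) (le_max_left _ K)) hQ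
    have hQM₀ : M₀ ≤ Q := le_trans (le_trans (le_max_right 1 M₀) (le_max_left _ K)) hQ
    have hQK : K ≤ Q := le_trans (le_max_right _ K) hQ
    have hQpos : (0:ℝ) < Q := by exact_mod_cast hQ1
    have hQsM : M₀ ≤ Q * s := le_trans hQM₀ (Nat.le_mul_of_pos_right Q hs)
    have hFQ : F (Q * s) ≤ 2 * L * (Q * s) := by
      have := hM₀ (Q * s) hQsM
      calc F (Q*s) ≤ 2 * L * ((Q*s : ℕ):ℝ) := this
        _ = 2 * L * (Q * s) := by push_cast; ring
    -- relate ∑ T (q*s) and L * ∑ c (q*s)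
    set h : ℕ → ℝ := fun q => c (q * s) with hh
    have hhb : ∀ q, |h q| ≤ 1 := fun q => hcb (q * s)
    have hTq : ∀ q, T (q*s) = ∑ j ∈ range L, h (q + j) := by
      intro q
      simp only [hT, hh]
      apply Finset.sum_congr rfl
      intro j _
      congr 1
      rw [add_mul]
    have hTsum : ∑ q ∈ range Q, T (q*s) = ∑ j ∈ range L, ∑ q ∈ range Q, h (q + j) := by
      rw [Finset.sum_congr rfl (fun q _ => hTq q)]
      exact Finset.sum_comm
    have key1 : |(L:ℝ) * ∑ q ∈ range Q, h q| ≤ |∑ q ∈ range Q, T (q*s)| + 2 * L^2 := by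
      have hdiff : |(∑ q ∈ range Q, T (q*s)) - (L:ℝ) * ∑ q ∈ range Q, h q| ≤ 2 * L^2 := by
        have : (∑ q ∈ range Q, T (q*s)) - (L:ℝ) * ∑ q ∈ range Q, h q
            = ∑ j ∈ range L, ((∑ q ∈ range Q, h (q + j)) - ∑ q ∈ range Q, h q) := by
          rw [hTsum,
            Finset.sum_sub_distrib (f := fun j => ∑ q ∈ range Q, h (q + j))
              (g := fun _ => ∑ q ∈ range Q, h q),
            Finset.sum_const, Finset.card_range, nsmul_eq_mul]
        rw [this]
        calc |∑ j ∈ range L, ((∑ q ∈ range Q, h (q + j)) - ∑ q ∈ range Q, h q)|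
            ≤ ∑ j ∈ range L, |(∑ q ∈ range Q, h (q + j)) - ∑ q ∈ range Q, h q| :=
              Finset.abs_sum_le_sum_abs _ _
          _ ≤ ∑ j ∈ range L, 2 * (j:ℝ) := Finset.sum_le_sum (fun j _ => abs_sum_shift hhb Q j)
          _ ≤ ∑ j ∈ range L, 2 * (L:ℝ) := by
              apply Finset.sum_le_sum
              intro j hj
              simp only [Finset.mem_range] at hj
              have : (j:ℝ) ≤ L := by exact_mod_cast hj.le
              linarith
          _ = 2 * L^2 := by rw [Finset.sum_const, Finset.card_range, nsmul_eq_mul]; ring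
      calc |(L:ℝ) * ∑ q ∈ range Q, h q|
          ≤ |∑ q ∈ range Q, T (q*s)|
            + |(∑ q ∈ range Q, T (q*s)) - (L:ℝ) * ∑ q ∈ range Q, h q| := by
            have := abs_sub_abs_le_abs_sub ((L:ℝ) * ∑ q ∈ range Q, h q) (∑ q ∈ range Q, T (q*s))
            have h2 := abs_sub_comm ((L:ℝ) * ∑ q ∈ range Q, h q) (∑ q ∈ range Q, T (q*s))
            linarith [abs_nonneg ((∑ q ∈ range Q, T (q*s)) - (L:ℝ) * ∑ q ∈ range Q, h q)]
        _ ≤ |∑ q ∈ range Q, T (q*s)| + 2 * L^2 := by linarith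
    have key2 : (∑ q ∈ range Q, T (q*s))^2 ≤ (Q:ℝ) * F (Q*s) := by
      have cs : (∑ q ∈ range Q, T (q*s))^2 ≤ (Q:ℝ) * ∑ q ∈ range Q, (T (q*s))^2 := by
        have := sq_sum_le_card_mul_sum_sq (s := range Q) (f := fun q => T (q*s))
        simpa using this
      have himg : ∑ q ∈ range Q, (T (q*s))^2 ≤ F (Q*s) := by
        have hinj : ∀ x ∈ range Q, ∀ y ∈ range Q, x * s = y * s → x = y := by
          intro x _ y _ hxy
          exact Nat.eq_of_mul_eq_mul_right hs hxy
        have e1 : ∑ q ∈ range Q, (T (q*s))^2 = ∑ m ∈ (range Q).image (fun q => q * s), (T m)^2 :=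
          (Finset.sum_image (g := fun q => q * s) (f := fun m => (T m)^2) hinj).symm
        rw [e1]
        apply Finset.sum_le_sum_of_subset_of_nonneg
        · intro m hm
          simp only [Finset.mem_image, Finset.mem_range] at hm
          obtain ⟨q, hq, rfl⟩ := hm
          simp only [Finset.mem_range]
          exact Nat.mul_lt_mul_of_lt_of_le hq le_rfl hs
        · intro m _ _
          positivity
      calc (∑ q ∈ range Q, T (q*s))^2 ≤ (Q:ℝ) * ∑ q ∈ range Q, (T (q*s))^2 := cs
        _ ≤ (Q:ℝ) * F (Q*s) := by
          apply mul_le_mul_of_nonneg_left himg hQpos.le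
    have hsq : (∑ q ∈ range Q, T (q*s))^2 ≤ (Q:ℝ)^2 * (2 * L * s) := by
      calc (∑ q ∈ range Q, T (q*s))^2 ≤ (Q:ℝ) * F (Q*s) := key2
        _ ≤ (Q:ℝ) * (2 * L * (Q * s)) := by
            apply mul_le_mul_of_nonneg_left hFQ hQpos.le
        _ = (Q:ℝ)^2 * (2 * L * s) := by ring
    have hTabs : |∑ q ∈ range Q, T (q*s)| ≤ (Q:ℝ) * Real.sqrt (2 * L * s) := by
      have h2Ls : (0:ℝ) ≤ 2 * L * s := by positivity
      calc |∑ q ∈ range Q, T (q*s)| = Real.sqrt ((∑ q ∈ range Q, T (q*s))^2) :=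
            (Real.sqrt_sq_eq_abs _).symm
        _ ≤ Real.sqrt ((Q:ℝ)^2 * (2 * L * s)) := Real.sqrt_le_sqrt hsq
        _ = (Q:ℝ) * Real.sqrt (2 * L * s) := by
            rw [Real.sqrt_mul (by positivity), Real.sqrt_sq hQpos.le]
    have hsqrtlt : Real.sqrt (2 * L * s) < ε * L / 2 := by
      rw [Real.sqrt_lt' (by positivity)]
      have hse : (0:ℝ) < ε^2 := by positivity
      have h8 : (8:ℝ) * s < ε^2 * L := by
        rw [div_lt_iff₀ hse] at hLr
        linarith
      have hspos : (0:ℝ) ≤ s := by positivity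
      nlinarith [mul_lt_mul_of_pos_right h8 hLpos]
    -- final estimate
    have hfinal : |∑ q ∈ range Q, h q| ≤ (Q:ℝ) * Real.sqrt (2 * L * s) / L + 2 * L := by
      have := key1
      have h3 : |(L:ℝ) * ∑ q ∈ range Q, h q| = L * |∑ q ∈ range Q, h q| := by
        rw [abs_mul, abs_of_pos hLpos]
      rw [h3] at this
      have h4 : (L:ℝ) * |∑ q ∈ range Q, h q| ≤ (Q:ℝ) * Real.sqrt (2 * L * s) + 2 * L^2 := by
        linarith [hTabs]
      calc |∑ q ∈ range Q, h q| = (L * |∑ q ∈ range Q, h q|) / L := by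
            field_simp
        _ ≤ ((Q:ℝ) * Real.sqrt (2 * L * s) + 2 * L^2) / L := by
            apply div_le_div_of_nonneg_right h4 hLpos.le
        _ = (Q:ℝ) * Real.sqrt (2 * L * s) / L + 2 * L := by
            field_simp
    rw [Real.dist_eq, sub_zero, abs_div, abs_of_pos hQpos]
    have hKQ : 2 * (L:ℝ) / Q < ε / 2 := by
      have hKpos : (0:ℝ) < K := by
        have : (0:ℝ) ≤ 4 * L / ε := by positivity
        linarith
      have hKQ' : (K:ℝ) ≤ Q := by exact_mod_cast hQK
      have h5 : 4 * (L:ℝ) < ε * K := by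
        rw [div_lt_iff₀ hε] at hK
        linarith
      rw [div_lt_iff₀ hQpos]
      nlinarith
    have h6 : |∑ q ∈ range Q, h q| / Q
        ≤ Real.sqrt (2 * L * s) / L + 2 * L / Q := by
      rw [div_le_iff₀ hQpos]
      have expand : (Real.sqrt (2 * L * s) / L + 2 * L / Q) * Q
          = (Q:ℝ) * Real.sqrt (2 * L * s) / L + 2 * L := by
        field_simp
      rw [expand]
      exact hfinal
    have h7 : Real.sqrt (2 * L * s) / L < ε / 2 := by
      rw [div_lt_iff₀ hLpos]
      calc Real.sqrt (2 * L * s) < ε * L / 2 := hsqrtlt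
        _ = ε / 2 * L := by ring
    calc |∑ q ∈ range Q, h q| / Q ≤ Real.sqrt (2 * L * s) / L + 2 * L / Q := h6
      _ < ε / 2 + ε / 2 := by linarith
      _ = ε := by ring
  -- Step E and conclusion
  have stepE : Tendsto (fun Q : ℕ => (∑ q ∈ range Q, y (q * s)) / Q) atTop (𝓝 v) := by
    have h2 := stepD.add (tendsto_avg_const v)
    rw [zero_add] at h2
    apply h2.congr
    intro Q
    rw [← add_div, ← Finset.sum_add_distrib]
    congr 1
    apply Finset.sum_congr rfl
    intro q _
    simp only [hc]
    ring
  rw [tendsto_card_div_iff]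
  have hfin : ind (fun i => ∀ j : Fin s, u (i * s + (j:ℕ)) < t j) = fun i => y (i * s) := by
    have e : (fun i => ∀ j : Fin s, u (i * s + (j:ℕ)) < t j) = fun i => Ev u t (i * s) := rfl
    rw [e, hy]
    exact ind_precomp (Ev u t) (fun i => i * s)
  rw [hfin]
  exact stepE

end FwdSec
section BwdSec

lemma tendsto_nat_div_const_atTop {D : ℕ} (hD : 0 < D) :
    Tendsto (fun N : ℕ => N / D) atTop atTop := by
  apply tendsto_atTop_atTop.2
  intro b
  exact ⟨b * D, fun N hN => (Nat.le_div_iff_mul_le hD).2 hN⟩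

lemma tendsto_floor_div {D : ℕ} (hD : 0 < D) :
    Tendsto (fun N : ℕ => ((N / D : ℕ) : ℝ) / N) atTop (𝓝 (1 / (D:ℝ))) := by
  have hDR : (0:ℝ) < D := by exact_mod_cast hD
  have key : ∀ N : ℕ, 1 ≤ N → ((N / D : ℕ) : ℝ) / N = 1 / D - ((N % D : ℕ) : ℝ) / (D * N) := by
    intro N hN
    have hNR : (0:ℝ) < N := by exact_mod_cast hN
    have hmod : (D:ℝ) * ((N / D : ℕ) : ℝ) + ((N % D : ℕ):ℝ) = N := by
      exact_mod_cast Nat.div_add_mod N D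
    field_simp
    nlinarith [hmod]
  have hsq : Tendsto (fun N : ℕ => ((N % D : ℕ) : ℝ) / (D * N)) atTop (𝓝 0) := by
    apply squeeze_zero' (g := fun N : ℕ => (D:ℝ) / (D * N))
    · filter_upwards with N
      positivity
    · filter_upwards [eventually_ge_atTop 1] with N hN
      have hNR : (0:ℝ) < N := by exact_mod_cast hN
      apply div_le_div_of_nonneg_right _ (by positivity)
      have := Nat.mod_lt N hD
      have : ((N % D : ℕ) : ℝ) < D := by exact_mod_cast this
      linarith
    · have : (fun N : ℕ => (D:ℝ) / (D * N)) = fun N : ℕ => (D:ℝ) * (1/D) * (1 / N) := by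
        funext N
        rcases Nat.eq_zero_or_pos N with h | h
        · subst h; simp
        · have hNR : (0:ℝ) < N := by exact_mod_cast h
          field_simp
      rw [this]
      simpa using tendsto_one_div_atTop_nhds_zero_nat.const_mul ((D:ℝ) * (1/D))
  have hfin := (tendsto_const_nhds (x := 1 / (D:ℝ)) (f := atTop (α := ℕ))).sub hsq
  rw [sub_zero] at hfin
  apply hfin.congr'
  filter_upwards [eventually_ge_atTop 1] with N hN
  exact (key N hN).symm

lemma tendsto_floor_div_succ {D : ℕ} (hD : 0 < D) :
    Tendsto (fun N : ℕ => ((N / D + 1 : ℕ) : ℝ) / N) atTop (𝓝 (1 / (D:ℝ))) := by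
  have h1 := (tendsto_floor_div hD).add tendsto_one_div_atTop_nhds_zero_nat
  rw [add_zero] at h1
  apply h1.congr'
  filter_upwards [eventually_ge_atTop 1] with N hN
  have hNR : (0:ℝ) < N := by exact_mod_cast hN
  push_cast
  field_simp

set_option maxHeartbeats 2000000 in
theorem backward (u : ℕ → ℝ) (hu : ∀ i, u i ∈ Set.Ico (0:ℝ) 1)
    (H : ∀ s : ℕ, 1 ≤ s → ∀ t : Fin s → ℝ, (∀ j, t j ∈ Set.Ioc (0 : ℝ) 1) →
      Tendsto (fun N : ℕ =>
        ((Nat.card {i : ℕ // i < N ∧ ∀ j : Fin s, u (i * s + (j : ℕ)) < t j} : ℕ) : ℝ) / N)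
        atTop (𝓝 (∏ j, t j)))
    {s : ℕ} (hs : 1 ≤ s) (t : Fin s → ℝ) (ht : ∀ j, t j ∈ Set.Ioc (0:ℝ) 1) :
    Tendsto (fun N : ℕ =>
      ((Nat.card {i : ℕ // i < N ∧ ∀ j : Fin s, u (i + (j : ℕ)) < t j} : ℕ) : ℝ) / N)
      atTop (𝓝 (∏ j, t j)) := by
  set v : ℝ := ∏ j, t j with hv
  set y : ℕ → ℝ := ind (Ev u t) with hy
  have hv0 : 0 < v := Finset.prod_pos (fun j _ => (ht j).1)
  have hv1 : v ≤ 1 := Finset.prod_le_one (fun j _ => (ht j).1.le) (fun j _ => (ht j).2)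
  have hyb : ∀ m, 0 ≤ y m ∧ y m ≤ 1 := fun m => ⟨ind_nonneg _ m, ind_le_one _ m⟩
  -- B1
  have B1 : ∀ D r : ℕ, r + s ≤ D →
      Tendsto (fun P : ℕ => (∑ p ∈ range P, y (p * D + r)) / P) atTop (𝓝 v) := by
    intro D r hrD
    have hD1 : 1 ≤ D := by omega
    have h0 := H D hD1 (fun j : Fin D => tWin t r (j : ℕ)) (fun j => tWin_mem t ht r (j : ℕ))
    rw [tendsto_card_div_iff] at h0
    have hprod : (∏ j : Fin D, tWin t r (j : ℕ)) = v := by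
      rw [Fin.prod_univ_eq_prod_range (fun j => tWin t r j) D]
      exact prod_tWin t hrD
    rw [hprod] at h0
    have hind : ind (fun i => ∀ j : Fin D, u (i * D + (j:ℕ)) < tWin t r (j:ℕ))
        = fun p => y (p * D + r) := by
      have h1 : ind (fun i => ∀ j : Fin D, u (i * D + (j:ℕ)) < tWin t r (j:ℕ))
          = ind (fun i => Ev u t (i * D + r)) :=
        ind_congr (fun i => ev_tWin_iff u t hu hrD (i * D))
      rw [h1, hy]
      exact ind_precomp (Ev u t) (fun i => i * D + r)
    rw [hind] at h0
    exact h0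
  -- composed limits
  have lowr : ∀ D r : ℕ, r + s ≤ D →
      Tendsto (fun N : ℕ => (∑ p ∈ range (N / D), y (p * D + r)) / N) atTop (𝓝 (v / D)) := by
    intro D r hrD
    have hD : 0 < D := by omega
    have h1 := (B1 D r hrD).comp (tendsto_nat_div_const_atTop hD)
    have h2 := h1.mul (tendsto_floor_div hD)
    rw [show v * (1 / (D:ℝ)) = v / D from by ring] at h2
    apply h2.congr'
    filter_upwards [eventually_ge_atTop D] with N hN
    have hND : 1 ≤ N / D := (Nat.le_div_iff_mul_le hD).2 (by omega)
    have hNDR : ((N / D : ℕ) : ℝ) ≠ 0 := by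
      have : (0:ℕ) < N / D := hND
      positivity
    have hNR : (N:ℝ) ≠ 0 := by
      have : 1 ≤ N := by omega
      have : (0:ℕ) < N := this
      positivity
    simp only [Function.comp]
    field_simp
  have upr : ∀ D r : ℕ, r + s ≤ D →
      Tendsto (fun N : ℕ => (∑ p ∈ range (N / D + 1), y (p * D + r)) / N)
        atTop (𝓝 (v / D)) := by
    intro D r hrD
    have hD : 0 < D := by omega
    have hcomp : Tendsto (fun N : ℕ => N / D + 1) atTop atTop := by
      apply tendsto_atTop_atTop.2
      intro b
      refine ⟨b * D, fun N hN => ?_⟩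
      have := (Nat.le_div_iff_mul_le hD).2 hN
      omega
    have h1 := (B1 D r hrD).comp hcomp
    have h2 := h1.mul (tendsto_floor_div_succ hD)
    rw [show v * (1 / (D:ℝ)) = v / D from by ring] at h2
    apply h2.congr'
    filter_upwards [eventually_ge_atTop 1] with N hN
    have hNDR : ((N / D + 1 : ℕ) : ℝ) ≠ 0 := by positivity
    have hNR : (N:ℝ) ≠ 0 := by
      have : (0:ℕ) < N := hN
      positivity
    simp only [Function.comp]
    field_simp
  -- counting lower bound
  have hlow : ∀ D : ℕ, s ≤ D → ∀ N : ℕ,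
      (∑ r ∈ range (D - s + 1), ∑ p ∈ range (N / D), y (p * D + r))
        ≤ ∑ m ∈ range N, y m := by
    intro D hsD N
    have hD : 0 < D := by omega
    rw [← Finset.sum_product' (s := range (D - s + 1)) (t := range (N / D))
      (f := fun r p => y (p * D + r))]
    have hinj : ∀ x ∈ (range (D - s + 1)) ×ˢ (range (N / D)),
        ∀ x' ∈ (range (D - s + 1)) ×ˢ (range (N / D)),
        x.2 * D + x.1 = x'.2 * D + x'.1 → x = x' := by
      intro x hx x' hx' hEq
      simp only [Finset.mem_product, Finset.mem_range] at hx hx'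
      have h1 : x.1 < D := by omega
      have h1' : x'.1 < D := by omega
      have e1 : ∀ a b : ℕ, a < D → (b * D + a) % D = a := by
        intro a b ha
        rw [add_comm, Nat.add_mul_mod_self_right, Nat.mod_eq_of_lt ha]
      have e2 : ∀ a b : ℕ, a < D → (b * D + a) / D = b := by
        intro a b ha
        rw [add_comm, Nat.add_mul_div_right _ _ hD, Nat.div_eq_of_lt ha, zero_add]
      apply Prod.ext
      · rw [← e1 x.1 x.2 h1, hEq, e1 x'.1 x'.2 h1']
      · rw [← e2 x.1 x.2 h1, hEq, e2 x'.1 x'.2 h1']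
    calc ∑ x ∈ (range (D - s + 1)) ×ˢ (range (N / D)), y (x.2 * D + x.1)
        = ∑ m ∈ ((range (D - s + 1)) ×ˢ (range (N / D))).image (fun x => x.2 * D + x.1), y m :=
          (Finset.sum_image (f := fun m => y m) hinj).symm
      _ ≤ ∑ m ∈ range N, y m := by
          apply Finset.sum_le_sum_of_subset_of_nonneg
          · intro m hm
            simp only [Finset.mem_image] at hm
            obtain ⟨x, hx, rfl⟩ := hm
            simp only [Finset.mem_product, Finset.mem_range] at hx
            simp only [Finset.mem_range]
            have hle : (x.2 + 1) * D ≤ (N / D) * D :=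
              Nat.mul_le_mul_right D (by omega)
            have hle2 : (N / D) * D ≤ N := Nat.div_mul_le_self N D
            have := le_trans hle hle2
            rw [add_mul, one_mul] at this
            omega
          · intro m _ _
            exact (hyb m).1
  -- counting upper bound
  have hup : ∀ D : ℕ, s ≤ D → ∀ N : ℕ,
      ∑ m ∈ range N, y m ≤ (∑ r ∈ range (D - s + 1), ∑ p ∈ range (N / D + 1), y (p * D + r))
        + (s : ℝ) * ((N / D + 1 : ℕ) : ℝ) := by
    intro D hsD N
    have hD : 0 < D := by omega
    have hsplit := (Finset.sum_filter_add_sum_filter_not (range N)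
      (fun m => m % D ≤ D - s) y).symm
    set good := (range N).filter (fun m => m % D ≤ D - s) with hgood
    set bad := (range N).filter (fun m => ¬ m % D ≤ D - s) with hbad
    have hgoodle : ∑ m ∈ good, y m
        ≤ ∑ r ∈ range (D - s + 1), ∑ p ∈ range (N / D + 1), y (p * D + r) := by
      rw [← Finset.sum_product' (s := range (D - s + 1)) (t := range (N / D + 1))
        (f := fun r p => y (p * D + r))]
      have hmap : ∀ m ∈ good, (m % D, m / D) ∈ (range (D - s + 1)) ×ˢ (range (N / D + 1)) := by
        intro m hm
        simp only [hgood, Finset.mem_filter, Finset.mem_range] at hm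
        simp only [Finset.mem_product, Finset.mem_range]
        refine ⟨by omega, ?_⟩
        have := Nat.div_le_div_right (c := D) (le_of_lt hm.1)
        omega
      have hinj2 : ∀ m ∈ good, ∀ m' ∈ good, (m % D, m / D) = (m' % D, m' / D) → m = m' := by
        intro m _ m' _ hEq
        have h1 : m % D = m' % D := congrArg Prod.fst hEq
        have h2 : m / D = m' / D := congrArg Prod.snd hEq
        have e1 := Nat.div_add_mod m D
        have e2 := Nat.div_add_mod m' D
        have e3 : D * (m / D) = D * (m' / D) := by rw [h2]
        omega
      calc ∑ m ∈ good, y m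
          = ∑ m ∈ good, (fun x : ℕ × ℕ => y (x.2 * D + x.1)) (m % D, m / D) := by
            apply Finset.sum_congr rfl
            intro m _
            simp only
            have hm2 : m = m / D * D + m % D := by
              rw [mul_comm]
              exact (Nat.div_add_mod m D).symm
            conv_lhs => rw [hm2]
        _ = ∑ x ∈ good.image (fun m => (m % D, m / D)), y (x.2 * D + x.1) :=
            (Finset.sum_image (f := fun x : ℕ × ℕ => y (x.2 * D + x.1)) hinj2).symm
        _ ≤ ∑ x ∈ (range (D - s + 1)) ×ˢ (range (N / D + 1)), y (x.2 * D + x.1) := by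
            apply Finset.sum_le_sum_of_subset_of_nonneg
            · intro x hx
              simp only [Finset.mem_image] at hx
              obtain ⟨m, hm, rfl⟩ := hx
              exact hmap m hm
            · intro x _ _
              exact (hyb _).1
    have hbadle : ∑ m ∈ bad, y m ≤ (s:ℝ) * ((N / D + 1 : ℕ) : ℝ) := by
      have hcard : bad.card ≤ s * (N / D + 1) := by
        have hsub : bad.card ≤ ((Finset.Ico (D - s + 1) D) ×ˢ (range (N / D + 1))).card := by
          apply Finset.card_le_card_of_injOn (fun m => (m % D, m / D))
          · intro m hm
            simp only [hbad, Finset.mem_coe, Finset.mem_filter, Finset.mem_range] at hm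
            simp only [Finset.mem_coe, Finset.mem_product, Finset.mem_Ico, Finset.mem_range]
            refine ⟨⟨by omega, Nat.mod_lt m hD⟩, ?_⟩
            have := Nat.div_le_div_right (c := D) (le_of_lt hm.1)
            omega
          · intro m hm m' hm' hEq
            simp only [Prod.mk.injEq] at hEq
            have e1 := Nat.div_add_mod m D
            have e2 := Nat.div_add_mod m' D
            have e3 : D * (m / D) = D * (m' / D) := by rw [hEq.2]
            omega
        calc bad.card ≤ ((Finset.Ico (D - s + 1) D) ×ˢ (range (N / D + 1))).card := hsub
          _ ≤ s * (N / D + 1) := by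
            rw [Finset.card_product, Nat.card_Ico, Finset.card_range]
            exact Nat.mul_le_mul_right _ (by omega)
      calc ∑ m ∈ bad, y m ≤ ∑ m ∈ bad, 1 := Finset.sum_le_sum (fun m _ => (hyb m).2)
        _ = (bad.card : ℝ) := by rw [Finset.sum_const, nsmul_eq_mul, mul_one]
        _ ≤ (s:ℝ) * ((N / D + 1 : ℕ) : ℝ) := by exact_mod_cast hcard
    calc ∑ m ∈ range N, y m = ∑ m ∈ good, y m + ∑ m ∈ bad, y m := hsplit
      _ ≤ (∑ r ∈ range (D - s + 1), ∑ p ∈ range (N / D + 1), y (p * D + r))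
          + (s : ℝ) * ((N / D + 1 : ℕ) : ℝ) := add_le_add hgoodle hbadle
  -- final squeeze
  rw [tendsto_card_div_iff]
  have hEv : (fun i => ∀ j : Fin s, u (i + (j:ℕ)) < t j) = Ev u t := rfl
  rw [hEv, ← hy]
  rw [Metric.tendsto_atTop]
  intro ε hε
  have hsR : (1:ℝ) ≤ s := by exact_mod_cast hs
  obtain ⟨k, hk⟩ := exists_nat_gt (4 * s / ε)
  have hkpos : 0 < k := by
    by_contra hcon
    push_neg at hcon
    interval_cases k
    · simp at hk
      have : (0:ℝ) < 4 * s / ε := by positivity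
      linarith
  set D := s + k with hDdef
  have hsD : s ≤ D := by omega
  have hDpos : 0 < D := by omega
  have hDR : (0:ℝ) < D := by exact_mod_cast hDpos
  set G := D - s + 1 with hG
  have hGD : (G:ℝ) = (D:ℝ) - s + 1 := by
    rw [hG]
    push_cast [hsD]
    ring
  have hLo : Tendsto (fun N : ℕ => ∑ r ∈ range G, (∑ p ∈ range (N / D), y (p * D + r)) / N)
      atTop (𝓝 ((G:ℝ) * (v / D))) := by
    have h0 := tendsto_finset_sum (range G)
      (fun r hr => lowr D r (by simp only [Finset.mem_range] at hr; omega))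
    simpa [Finset.sum_const, Finset.card_range, nsmul_eq_mul] using h0
  have hHi : Tendsto (fun N : ℕ =>
      (∑ r ∈ range G, (∑ p ∈ range (N / D + 1), y (p * D + r)) / N)
        + (s:ℝ) * (((N / D + 1 : ℕ) : ℝ) / N))
      atTop (𝓝 ((G:ℝ) * (v / D) + (s:ℝ) * (1 / D))) := by
    have h0 := tendsto_finset_sum (range G)
      (fun r hr => upr D r (by simp only [Finset.mem_range] at hr; omega))
    have h1 := (tendsto_floor_div_succ hDpos).const_mul (s:ℝ)
    have h2 := h0.add h1
    simpa [Finset.sum_const, Finset.card_range, nsmul_eq_mul] using h2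
  obtain ⟨N₁, hN₁⟩ := Metric.tendsto_atTop.1 hLo (ε/4) (by positivity)
  obtain ⟨N₂, hN₂⟩ := Metric.tendsto_atTop.1 hHi (ε/4) (by positivity)
  refine ⟨max (max N₁ N₂) 1, fun N hN => ?_⟩
  have hNN1 : N ≥ N₁ := le_trans (le_trans (le_max_left N₁ N₂) (le_max_left _ 1)) hN
  have hNN2 : N ≥ N₂ := le_trans (le_trans (le_max_right N₁ N₂) (le_max_left _ 1)) hN
  have hN1 : 1 ≤ N := le_trans (le_max_right _ 1) hN
  have hNpos : (0:ℝ) < N := by exact_mod_cast hN1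
  have hdist1 := hN₁ N hNN1
  have hdist2 := hN₂ N hNN2
  rw [Real.dist_eq] at hdist1 hdist2
  have hfl : ∑ r ∈ range G, (∑ p ∈ range (N / D), y (p * D + r)) / N
      ≤ (∑ m ∈ range N, y m) / N := by
    rw [← Finset.sum_div]
    apply div_le_div_of_nonneg_right (hlow D hsD N) hNpos.le
  have hfu : (∑ m ∈ range N, y m) / N
      ≤ (∑ r ∈ range G, (∑ p ∈ range (N / D + 1), y (p * D + r)) / N)
        + (s:ℝ) * (((N / D + 1 : ℕ) : ℝ) / N) := by
    have h3 := div_le_div_of_nonneg_right (hup D hsD N) hNpos.le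
    calc (∑ m ∈ range N, y m) / N
        ≤ ((∑ r ∈ range G, ∑ p ∈ range (N / D + 1), y (p * D + r))
            + (s : ℝ) * ((N / D + 1 : ℕ) : ℝ)) / N := h3
      _ = (∑ r ∈ range G, (∑ p ∈ range (N / D + 1), y (p * D + r)) / N)
          + (s:ℝ) * (((N / D + 1 : ℕ) : ℝ) / N) := by
          rw [add_div, Finset.sum_div, mul_div_assoc]
  have hsD4 : (s:ℝ) / D < ε / 4 := by
    have hkR : (4:ℝ) * s / ε < k := hk
    have hkR2 : (k:ℝ) ≤ D := by
      rw [hDdef]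
      push_cast
      linarith
    rw [div_lt_iff₀ hDR]
    rw [div_lt_iff₀ hε] at hkR
    nlinarith
  have hGlow : v - (s:ℝ)/D ≤ (G:ℝ) * (v / D) := by
    rw [hGD, ← mul_le_mul_iff_of_pos_right hDR]
    have e1 : (v - (s:ℝ)/D) * D = v * D - s := by field_simp
    have e2 : (((D:ℝ) - s + 1) * (v / D)) * D = ((D:ℝ) - s + 1) * v := by field_simp
    rw [e1, e2]
    nlinarith
  have hGhi : (G:ℝ) * (v / D) ≤ v := by
    rw [hGD, ← mul_le_mul_iff_of_pos_right hDR]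
    have e2 : (((D:ℝ) - s + 1) * (v / D)) * D = ((D:ℝ) - s + 1) * v := by field_simp
    rw [e2]
    nlinarith
  have habs1 := abs_lt.1 hdist1
  have habs2 := abs_lt.1 hdist2
  rw [Real.dist_eq, abs_lt]
  have hms : (s:ℝ) * (1 / D) = (s:ℝ) / D := by ring
  constructor
  · have : (G:ℝ) * (v / D) - ε/4
        < ∑ r ∈ range G, (∑ p ∈ range (N / D), y (p * D + r)) / N := by linarith
    linarith [hfl, hGlow, hsD4]
  · have : (∑ r ∈ range G, (∑ p ∈ range (N / D + 1), y (p * D + r)) / N)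
        + (s:ℝ) * (((N / D + 1 : ℕ) : ℝ) / N)
        < (G:ℝ) * (v / D) + (s:ℝ) * (1 / D) + ε/4 := by linarith
    rw [hms] at this
    linarith [hfu, hGhi, hsD4]

end BwdSec
end Chentsov

/-- **Chentsov's theorem.** A sequence `u : ℕ → [0,1)` is completely uniformly
distributed (its overlapping `s`-blocks are uniformly distributed for every `s ≥ 1`)
if and only if its non-overlapping `s`-blocks are uniformly distributed for
every `s ≥ 1`. -/
theorem chentsov_cud_iff_nonoverlapping (u : ℕ → ℝ) (hu : ∀ i, u i ∈ Set.Ico (0 : ℝ) 1) :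
    (∀ s : ℕ, 1 ≤ s → ∀ t : Fin s → ℝ, (∀ j, t j ∈ Set.Ioc (0 : ℝ) 1) →
        Filter.Tendsto
          (fun N : ℕ =>
            (Nat.card {i : ℕ // i < N ∧ ∀ j : Fin s, u (i + (j : ℕ)) < t j} : ℝ) / N)
          Filter.atTop (nhds (∏ j, t j)))
    ↔ (∀ s : ℕ, 1 ≤ s → ∀ t : Fin s → ℝ, (∀ j, t j ∈ Set.Ioc (0 : ℝ) 1) →
        Filter.Tendsto
          (fun N : ℕ =>
            (Nat.card {i : ℕ // i < N ∧ ∀ j : Fin s, u (i * s + (j : ℕ)) < t j} : ℝ) / N)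
          Filter.atTop (nhds (∏ j, t j))) := by
  constructor
  · intro H s hs t ht
    exact Chentsov.forward u hu H hs t ht
  · intro H s hs t ht
    exact Chentsov.backward u hu H hs t ht
end

section
/- Let F_2 be the field with 2 elements, let p(x) ∈ F_2[x] be an irreducible polynomial with m = deg(p) ≥ 2, and let q(x) ∈ F_2[x] with deg(q) < m and K(q/p) = 1, i.e., there exist polynomials A_1(x), …, A_m(x) ∈ F_2[x], each of degree exactly 1, such that the Fibonacci polynomials F_{−1} = 0, F_0 = 1, F_k = A_k F_{k−1} + F_{k−2} (1 ≤ k ≤ m) satisfy F_m = p and F_{m−1} = q. Let q'(x) ∈ F_2[x] be the unique polynomial with deg(q') < m and q(x)·q'(x) ≡ 1 (mod p(x)). Then K(q'/p) = 1 as well: there exist degree-one polynomials A'_1(x), …, A'_m(x) ∈ F_2[x] whose Fibonacci polynomials F' satisfy F'_m = p and F'_{m−1} = q'. In particular, the two polynomials counted by the orthogonal multiplicity M(p) = 2 are q and its inverse q^{−1} mod p. -/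
/-- The Fibonacci polynomials over a field `F` attached to a sequence of
polynomials `A`, with the index shifted by one: `fibP A (k+1) = F_k`, where
`F_{−1} = 0`, `F_0 = 1` and `F_k = A_k · F_{k−1} + F_{k−2}` for `k ≥ 1`.
So `fibP A 0 = F_{−1} = 0`, `fibP A 1 = F_0 = 1`, and
`fibP A (k+2) = F_{k+1} = A_{k+1} · F_k + F_{k−1}`. -/
noncomputable def fibP {F : Type*} [Field F] (A : ℕ → Polynomial F) :
    ℕ → Polynomial F
  | 0 => 0
  | 1 => 1
  | k + 2 => A (k + 1) * fibP A (k + 1) + fibP A k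


open Polynomial Matrix

noncomputable def PmM {F : Type*} [Field F] (A : ℕ → Polynomial F) :
    ℕ → Matrix (Fin 2) (Fin 2) (Polynomial F)
  | 0 => 1
  | n + 1 => PmM A n * !![A (n+1), 1; 1, 0]

lemma fibP_congr {F : Type*} [Field F] (A B : ℕ → Polynomial F)
    (n : ℕ) (h : ∀ k, 1 ≤ k → k ≤ n → A k = B k) : fibP A (n+1) = fibP B (n+1) := by
  induction n using Nat.strong_induction_on with
  | _ n ih =>
    match n with
    | 0 => rfl
    | 1 => simp [fibP, h 1 le_rfl le_rfl]
    | (n+2) =>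
      show A (n+2) * fibP A (n+2) + fibP A (n+1) = B (n+2) * fibP B (n+2) + fibP B (n+1)
      rw [h (n+2) (by omega) le_rfl,
        ih (n+1) (by omega) (fun k h1 h2 => h k h1 (by omega)),
        ih n (by omega) (fun k h1 h2 => h k h1 (by omega))]

lemma PmM_entries {F : Type*} [Field F] (A : ℕ → Polynomial F) (n : ℕ) :
    PmM A (n+1) = !![fibP A (n+2), fibP A (n+1);
                     fibP (fun k => A (k+1)) (n+1), fibP (fun k => A (k+1)) n] := by
  induction n with
  | zero =>
    show (1 : Matrix (Fin 2) (Fin 2) (Polynomial F)) * _ = _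
    rw [one_mul]
    norm_num [fibP]
  | succ n ih =>
    show PmM A (n+1) * _ = _
    rw [ih, Matrix.mul_fin_two]
    ext i j
    fin_cases i <;> fin_cases j <;> simp [fibP, mul_comm]

lemma PmM_congr {F : Type*} [Field F] (A B : ℕ → Polynomial F)
    (n : ℕ) (h : ∀ k, 1 ≤ k → k ≤ n → A k = B k) : PmM A n = PmM B n := by
  induction n with
  | zero => rfl
  | succ n ih =>
    show PmM A n * _ = PmM B n * _
    rw [ih (fun k h1 h2 => h k h1 (by omega)), h (n+1) (by omega) le_rfl]

lemma PmM_shift {F : Type*} [Field F] (A : ℕ → Polynomial F) (n : ℕ) :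
    PmM A (n+1) = !![A 1, 1; 1, 0] * PmM (fun k => A (k+1)) n := by
  induction n with
  | zero => show _ = _ * 1; rw [mul_one]; show (1:Matrix _ _ _) * _ = _; rw [one_mul]
  | succ n ih =>
    show PmM A (n+1) * _ = _ * (PmM (fun k => A (k+1)) n * _)
    rw [ih, mul_assoc]

lemma PmM_transpose {F : Type*} [Field F] (A : ℕ → Polynomial F) (n : ℕ) :
    (PmM A n)ᵀ = PmM (fun k => A (n+1-k)) n := by
  induction n generalizing A with
  | zero => simp [PmM, Matrix.transpose_one]
  | succ n ih =>
    rw [PmM_shift, Matrix.transpose_mul, ih]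
    have h2 : (!![A 1, 1; 1, 0] : Matrix (Fin 2) (Fin 2) (Polynomial F))ᵀ
        = !![A 1, 1; 1, 0] := by
      ext i j; fin_cases i <;> fin_cases j <;> rfl
    rw [h2]
    have := PmM_congr (fun k => (fun k => A (k+1)) (n+1-k)) (fun k => A (n+2-k)) n
      (fun k h1 h2 => by simp only []; congr 1; omega)
    rw [this]
    have hgoal : PmM (fun k => A (n+1+1-k)) (n+1)
        = PmM (fun k => A (n+2-k)) n * !![A 1, 1; 1, 0] := by
      show PmM (fun k => A (n+2-k)) n * !![A (n+2-(n+1)), 1; 1, 0] = _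
      rw [show n+2-(n+1) = 1 from by omega]
    rw [hgoal]

lemma PmM_det {F : Type*} [Field F] (A : ℕ → Polynomial F) (n : ℕ) :
    (PmM A n).det = (-1)^n := by
  induction n with
  | zero => simp [PmM]
  | succ n ih =>
    show ((PmM A n) * _).det = _
    rw [Matrix.det_mul, ih, Matrix.det_fin_two_of]
    ring

lemma fibP_natDegree {F : Type*} [Field F] (A : ℕ → Polynomial F) (N : ℕ)
    (hA : ∀ k, 1 ≤ k → k ≤ N → (A k).natDegree = 1) :
    ∀ n, n ≤ N → (fibP A (n+1)).natDegree = n ∧ fibP A (n+1) ≠ 0 := by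
  intro n
  induction n using Nat.strong_induction_on with
  | _ n ih =>
    intro hn
    match n with
    | 0 => exact ⟨by simp [fibP], one_ne_zero⟩
    | 1 =>
      have : fibP A 2 = A 1 := by simp [fibP]
      refine ⟨by rw [this]; exact hA 1 le_rfl hn, ?_⟩
      rw [this]; intro h
      have := hA 1 le_rfl hn
      rw [h] at this; simp at this
    | (n+2) =>
      obtain ⟨d1, nz1⟩ := ih (n+1) (by omega) (by omega)
      obtain ⟨d0, nz0⟩ := ih n (by omega) (by omega)
      have hAn : (A (n+2)).natDegree = 1 := hA (n+2) (by omega) hn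
      have hAnz : A (n+2) ≠ 0 := fun h => by rw [h] at hAn; simp at hAn
      have hmul : (A (n+2) * fibP A (n+2)).natDegree = n + 2 := by
        rw [natDegree_mul hAnz nz1, hAn, d1]; omega
      have hlt : (fibP A (n+1)).natDegree < (A (n+2) * fibP A (n+2)).natDegree := by
        rw [hmul, d0]; omega
      have heq : (fibP A (n+3)).natDegree = n + 2 := by
        show (A (n+2) * fibP A (n+2) + fibP A (n+1)).natDegree = n + 2
        rw [natDegree_add_eq_left_of_natDegree_lt hlt, hmul]
      refine ⟨heq, fun h => by rw [h] at heq; simp at heq⟩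


/-- Over `F_2`, if `p` is irreducible of degree `m ≥ 2` and `q` (of degree `< m`)
has `K(q/p) = 1`, witnessed by degree-one partial quotients `A_1, …, A_m` whose
Fibonacci polynomials satisfy `F_m = p`, `F_{m−1} = q`, then the inverse
`q' = q⁻¹ mod p` (the unique polynomial of degree `< m` with `q·q' ≡ 1 (mod p)`)
also has `K(q'/p) = 1`, witnessed likewise. -/
theorem mesirov_sweet_inverse (p q q' : Polynomial (ZMod 2))
    (hirr : Irreducible p) (m : ℕ) (hm : m = p.natDegree) (h2 : 2 ≤ m)
    (hqdeg : q.natDegree < m)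
    (A : ℕ → Polynomial (ZMod 2))
    (hA : ∀ k, 1 ≤ k → k ≤ m → (A k).natDegree = 1)
    (hFm : fibP A (m + 1) = p) (hFm1 : fibP A m = q)
    (hq'deg : q'.natDegree < m) (hq'inv : p ∣ q * q' - 1) :
    ∃ A' : ℕ → Polynomial (ZMod 2),
      (∀ k, 1 ≤ k → k ≤ m → (A' k).natDegree = 1) ∧
      fibP A' (m + 1) = p ∧ fibP A' m = q' := by
  set A' : ℕ → Polynomial (ZMod 2) := fun k => A (m+1-k) with hA'def
  have hA' : ∀ k, 1 ≤ k → k ≤ m → (A' k).natDegree = 1 := by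
    intro k h1 h2'
    exact hA (m+1-k) (by omega) (by omega)
  set B : ℕ → Polynomial (ZMod 2) := fun k => A (k+1) with hBdef
  set g : Polynomial (ZMod 2) := fibP B m with hgdef
  -- transpose identity: fibP A' (m+1) = fibP A (m+1), fibP A' m = fibP B m
  obtain ⟨m', hm'⟩ : ∃ m', m = m' + 1 := ⟨m - 1, by omega⟩
  have htr := PmM_transpose A m
  rw [hm'] at htr
  rw [PmM_entries A m', PmM_entries (fun k => A (m'+1+1-k)) m'] at htr
  have h00 : fibP A (m'+2) = fibP (fun k => A (m'+1+1-k)) (m'+2) := by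
    have := congrFun (congrFun htr 0) 0
    simpa using this
  have h01 : fibP B (m'+1) = fibP (fun k => A (m'+1+1-k)) (m'+1) := by
    have := congrFun (congrFun htr 0) 1
    simpa [hBdef] using this
  have e00 : fibP A (m'+2) = fibP A' (m'+2) := by
    rw [h00]
    exact fibP_congr _ _ _ (fun k h1 h2 => by simp only [hA'def]; congr 1; omega)
  have e01 : fibP B (m'+1) = fibP A' (m'+1) := by
    rw [h01]
    exact fibP_congr _ _ _ (fun k h1 h2 => by simp only [hA'def]; congr 1; omega)
  -- determinant identity
  have hdet := PmM_det A m
  rw [hm', PmM_entries A m', Matrix.det_fin_two_of] at hdet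
  -- hdet : fibP A (m'+2) * fibP B m' - fibP A (m'+1) * fibP B (m'+1) = (-1)^(m'+1)
  have hsign : ((-1 : Polynomial (ZMod 2)))^(m'+1) = 1 := by
    have : (-1 : Polynomial (ZMod 2)) = 1 := by
      have : (1 : Polynomial (ZMod 2)) + 1 = 0 := by
        rw [← Polynomial.C_1, ← Polynomial.C_add]
        norm_num
        rfl
      linear_combination -this
    rw [this, one_pow]
  rw [hsign] at hdet
  -- rewrite: p * c - q * g = 1 where g = fibP B (m'+1)
  have hml : m' + 2 = m + 1 := by omega
  have hml2 : m' + 1 = m := by omega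
  rw [hml] at hdet
  rw [hml2] at hdet
  rw [hFm, hFm1] at hdet
  -- char 2 manipulations: p ∣ q * g - 1
  have hdvd_g : p ∣ q * g - 1 := by
    refine ⟨-(fibP B m'), ?_⟩
    have h2z : (2 : Polynomial (ZMod 2)) = 0 := by
      have := CharP.cast_eq_zero (Polynomial (ZMod 2)) 2
      exact_mod_cast this
    linear_combination hdet + q * g * h2z
  -- uniqueness: q' = g
  have hpq : ¬ p ∣ q := by
    intro hd
    rcases eq_or_ne q 0 with rfl | hq0
    · rw [zero_mul, zero_sub] at hq'inv
      have := Polynomial.natDegree_le_of_dvd hq'inv (by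
        intro h
        apply_fun (fun r => Polynomial.coeff r 0) at h
        simp at h)
      simp at this
      omega
    · have := Polynomial.natDegree_le_of_dvd hd hq0
      omega
  have hdvd_diff : p ∣ q * (q' - g) := by
    have : q * (q' - g) = (q * q' - 1) - (q * g - 1) := by ring
    rw [this]
    exact dvd_sub hq'inv hdvd_g
  have hdg : g.natDegree < m ∧ g ≠ 0 := by
    have := fibP_natDegree B m' (fun k h1 h2' => hA (k+1) (by omega) (by omega)) m' le_rfl
    constructor
    · rw [hgdef, hm']; rw [this.1]; omega
    · rw [hgdef, hm']; exact this.2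
  have : q' = g := by
    have hd2 : p ∣ (q' - g) := (hirr.prime.dvd_mul.mp hdvd_diff).resolve_left hpq
    by_contra hne
    have hnz : q' - g ≠ 0 := sub_ne_zero.mpr hne
    have := Polynomial.natDegree_le_of_dvd hd2 hnz
    have hle : (q' - g).natDegree < m := by
      calc (q' - g).natDegree ≤ max q'.natDegree g.natDegree := Polynomial.natDegree_sub_le _ _
        _ < m := max_lt hq'deg hdg.1
    omega
  refine ⟨A', hA', ?_, ?_⟩
  · rw [← hFm, (by omega : m + 1 = m' + 2)]; exact e00.symm
  · rw [this, hgdef, hm']; exact e01.symm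
end

section
/- Let F_b be a finite field with b elements and let p(x) ∈ F_b[x] be a monic irreducible polynomial with 0 < m = deg(p) < b. Then the orthogonal multiplicity of p is positive: there exist polynomials A_1(x), …, A_m(x) ∈ F_b[x], each of degree exactly 1, and a nonzero constant c ∈ F_b such that the Fibonacci polynomials defined by F_{−1} = 0, F_0 = 1, F_k = A_k F_{k−1} + F_{k−2} (1 ≤ k ≤ m) satisfy F_m = c·p; consequently there exists q(x) ∈ F_b[x] with deg(q) < m such that all partial quotients of the continued fraction expansion of q(x)/p(x) have degree one. -/
/-- Value of a continued fraction `[A_{v+1}; A_v, …, A_1]`, given as the list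
`[A_{v+1}, A_v, …, A_1]`, in the field of rational functions:
`A_{v+1} + 1/(A_v + 1/(⋯ + 1/A_1))` (with the convention `0⁻¹ = 0`, so the value
of the innermost singleton `[A_1]` is `A_1`). -/
noncomputable def cfVal {F : Type*} [Field F] : List (Polynomial F) → RatFunc F
  | [] => 0
  | A :: rest => algebraMap (Polynomial F) (RatFunc F) A + (cfVal rest)⁻¹

open Polynomial Finset

namespace Friesen

variable {F : Type*} [Field F]

theorem fibP_zero (A : ℕ → Polynomial F) : fibP A 0 = 0 := rfl
theorem fibP_one (A : ℕ → Polynomial F) : fibP A 1 = 1 := rfl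
theorem fibP_add_two (A : ℕ → Polynomial F) (k : ℕ) :
    fibP A (k+2) = A (k+1) * fibP A (k+1) + fibP A k := rfl

theorem fibP_congr (A B : ℕ → Polynomial F) :
    ∀ n, (∀ i, 1 ≤ i → i < n → A i = B i) → fibP A n = fibP B n
  | 0, _ => rfl
  | 1, _ => rfl
  | (k+2), h => by
      rw [fibP_add_two, fibP_add_two, h (k+1) (by omega) (by omega),
        fibP_congr A B (k+1) (fun i h1 h2 => h i h1 (by omega)),
        fibP_congr A B k (fun i h1 h2 => h i h1 (by omega))]

theorem fibP_degree (A : ℕ → Polynomial F) (n : ℕ)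
    (hdeg : ∀ j, 1 ≤ j → j ≤ n → (A j).natDegree = 1) :
    ∀ k, k ≤ n → (fibP A (k+1)).degree = k := by
  intro k
  induction k using Nat.strong_induction_on with
  | _ k ih =>
    match k with
    | 0 => intro _; simp [fibP_one]
    | 1 =>
      intro h1
      have hA : (A 1).natDegree = 1 := hdeg 1 le_rfl h1
      have hA0 : A 1 ≠ 0 := fun h => by simp [h] at hA
      rw [show (1:ℕ)+1 = 0+2 from rfl, fibP_add_two, fibP_one, fibP_zero,
        mul_one, add_zero, degree_eq_natDegree hA0, hA]
    | (k+2) =>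
      intro hk2
      have hA : (A (k+2)).natDegree = 1 := hdeg (k+2) (by omega) hk2
      have hA0 : A (k+2) ≠ 0 := fun h => by simp [h] at hA
      have h1 : (fibP A (k+2)).degree = (k+1 : ℕ) := ih (k+1) (by omega) (by omega)
      have h0 : (fibP A (k+1)).degree ≤ (k : ℕ) := by
        match k with
        | 0 => simp [fibP_one]
        | (j+1) => exact le_of_eq (ih (j+1) (by omega) (by omega))
      rw [show k+2+1 = (k+1)+2 from rfl, fibP_add_two]
      have hmul : (A (k+2) * fibP A (k+2)).degree = (k+2 : ℕ) := by
        rw [degree_mul, degree_eq_natDegree hA0, hA, h1]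
        norm_cast
        omega
      rw [degree_add_eq_left_of_degree_lt, hmul]
      rw [hmul]
      calc (fibP A (k+1)).degree ≤ (k:ℕ) := h0
        _ < ((k+2 : ℕ) : WithBot ℕ) := by norm_cast; omega

theorem fibP_natDegree (A : ℕ → Polynomial F) (n : ℕ)
    (hdeg : ∀ j, 1 ≤ j → j ≤ n → (A j).natDegree = 1) (k : ℕ) (hk : k ≤ n) :
    (fibP A (k+1)).natDegree = k :=
  natDegree_eq_of_degree_eq_some (fibP_degree A n hdeg k hk)

theorem fibP_ne_zero (A : ℕ → Polynomial F) (n : ℕ)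
    (hdeg : ∀ j, 1 ≤ j → j ≤ n → (A j).natDegree = 1) (k : ℕ) (hk : k ≤ n) :
    fibP A (k+1) ≠ 0 := by
  intro h
  have := fibP_degree A n hdeg k hk
  rw [h, degree_zero] at this
  exact absurd this (by simp)

/-- the list [A n, A (n-1), ..., A 1] -/
def lst (A : ℕ → Polynomial F) : ℕ → List (Polynomial F)
  | 0 => []
  | n + 1 => A (n+1) :: lst A n

theorem mem_lst (A : ℕ → Polynomial F) (n : ℕ) (a : Polynomial F) :
    a ∈ lst A n → ∃ i, 1 ≤ i ∧ i ≤ n ∧ a = A i := by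
  induction n with
  | zero => simp [lst]
  | succ n ih =>
    intro h
    rcases List.mem_cons.1 h with h | h
    · exact ⟨n+1, by omega, le_rfl, h⟩
    · obtain ⟨i, h1, h2, h3⟩ := ih h
      exact ⟨i, h1, by omega, h3⟩

theorem cfVal_lst (A : ℕ → Polynomial F) (n : ℕ)
    (hdeg : ∀ j, 1 ≤ j → j ≤ n → (A j).natDegree = 1) :
    cfVal (lst A n)
      = algebraMap (Polynomial F) (RatFunc F) (fibP A (n+1)) /
        algebraMap (Polynomial F) (RatFunc F) (fibP A n) := by
  induction n with
  | zero =>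
    show (0 : RatFunc F) = _
    simp [fibP]
  | succ n ih =>
    have hih := ih (fun j h1 h2 => hdeg j h1 (by omega))
    show algebraMap (Polynomial F) (RatFunc F) (A (n+1)) + (cfVal (lst A n))⁻¹ = _
    rw [hih, inv_div, fibP_add_two, map_add, map_mul]
    have hne : algebraMap (Polynomial F) (RatFunc F) (fibP A (n+1)) ≠ 0 := by
      rw [ne_eq, map_eq_zero_iff _ (RatFunc.algebraMap_injective F)]
      exact fibP_ne_zero A n (fun j h1 h2 => hdeg j h1 (by omega)) n le_rfl
    field_simp

/-- `ℓ` is nondegenerate along the degree flag up to level `m`. -/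
def Good (ℓ : Polynomial F →ₗ[F] F) (m : ℕ) : Prop :=
  ∀ k, 1 ≤ k → k ≤ m → ∀ q ∈ degreeLT F k, q ≠ 0 → ∃ r ∈ degreeLT F k, ℓ (q * r) ≠ 0

theorem l_C_mul (ℓ : Polynomial F →ₗ[F] F) (t : F) (g : Polynomial F) :
    ℓ (C t * g) = t * ℓ g := by
  rw [← smul_eq_C_mul, map_smul, smul_eq_mul]

theorem orth_poly (ℓ : Polynomial F →ₗ[F] F) (k : ℕ) (f : Polynomial F)
    (h : ∀ i < k, ℓ (f * X ^ i) = 0) :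
    ∀ r ∈ degreeLT F k, ℓ (f * r) = 0 := by
  intro r hr
  rw [mem_degreeLT] at hr
  rcases Nat.eq_zero_or_pos k with rfl | hk
  · have : r = 0 := by
      rw [← degree_eq_bot]
      exact Nat.WithBot.lt_zero_iff.1 (by exact_mod_cast hr)
    simp [this]
  · have hrd : r.natDegree < k := by
      rcases eq_or_ne r 0 with rfl | hr0
      · simpa using hk
      · exact natDegree_lt_iff_degree_lt hr0 |>.2 hr
    conv_lhs => rw [r.as_sum_range' k hrd]
    rw [Finset.mul_sum, map_sum]
    apply Finset.sum_eq_zero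
    intro i hi
    rw [← C_mul_X_pow_eq_monomial, mul_left_comm, l_C_mul, h i (Finset.mem_range.1 hi),
      mul_zero]

theorem e_ne (ℓ : Polynomial F →ₗ[F] F) (m : ℕ) (hgood : Good ℓ m) (j : ℕ)
    (hj : j + 1 ≤ m) (f : Polynomial F) (hf0 : f ≠ 0)
    (hfd : f.degree < ((j+1 : ℕ) : WithBot ℕ))
    (horth : ∀ i < j, ℓ (f * X ^ i) = 0) :
    ℓ (f * X ^ j) ≠ 0 := by
  intro he
  have hall : ∀ i < j + 1, ℓ (f * X ^ i) = 0 := by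
    intro i hi
    rcases Nat.lt_succ_iff_lt_or_eq.1 hi with h | rfl
    · exact horth i h
    · exact he
  obtain ⟨r, hr, hlr⟩ := hgood (j+1) (by omega) hj f (mem_degreeLT.2 hfd) hf0
  exact hlr (orth_poly ℓ (j+1) f hall r hr)

theorem exists_A (ℓ : Polynomial F →ₗ[F] F) (m : ℕ) (hgood : Good ℓ m) :
    ∀ k, k ≤ m → ∃ A : ℕ → Polynomial F,
      (∀ j, 1 ≤ j → j ≤ k → (A j).natDegree = 1) ∧
      (∀ j, j ≤ k → ∀ i, i < j → ℓ (fibP A (j+1) * X ^ i) = 0) := by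
  intro k
  induction k with
  | zero =>
    intro _
    refine ⟨fun _ => X, by omega, ?_⟩
    intro j hj i hi; omega
  | succ k ih =>
    intro hk1
    obtain ⟨A, hdeg, horth⟩ := ih (by omega)
    -- degree facts
    have hFdeg : ∀ j, j ≤ k → (fibP A (j+1)).degree = j := fibP_degree A k hdeg
    have hFne : ∀ j, j ≤ k → fibP A (j+1) ≠ 0 := fibP_ne_zero A k hdeg
    -- the new partial quotient
    match k, hk1, hdeg, horth, hFdeg, hFne with
    | 0, hk1, hdeg, horth, hFdeg, hFne =>
      have hl1 : ℓ 1 ≠ 0 := by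
        have := e_ne ℓ m hgood 0 hk1 1 one_ne_zero (by
          rw [degree_one]; exact_mod_cast Nat.zero_lt_one) (by omega)
        simpa using this
      set c : F := -(ℓ X) / ℓ 1 with hc
      refine ⟨Function.update A 1 (X + C c), ?_, ?_⟩
      · intro j h1 h2
        have : j = 1 := by omega
        subst this
        rw [Function.update_self]
        have : (X + C c : Polynomial F).degree = 1 := by
          simpa using degree_X_add_C (a := c)
        exact natDegree_eq_of_degree_eq_some this
      · intro j hj i hi
        have : j = 1 := by omega
        subst this
        have : i = 0 := by omega
        subst this
        have h2 : fibP (Function.update A 1 (X + C c)) 2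
            = (X + C c) * 1 + 0 := by
          rw [fibP_add_two, fibP_one, fibP_zero, Function.update_self]
        rw [h2, pow_zero, mul_one, add_zero, mul_one, map_add,
          show (C c : Polynomial F) = C c * 1 from (mul_one _).symm, l_C_mul, hc,
          div_mul_cancel₀ _ hl1]
        ring
    | (j + 1), hk1, hdeg, horth, hFdeg, hFne =>
      set F0 := fibP A (j+1) with hF0
      set F1 := fibP A (j+2) with hF1
      have hF1orth : ∀ i, i < j + 1 → ℓ (F1 * X ^ i) = 0 := fun i hi =>
        horth (j+1) le_rfl i hi
      have hF0orth : ∀ i, i < j → ℓ (F0 * X ^ i) = 0 := fun i hi =>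
        horth j (by omega) i hi
      have he0 : ℓ (F0 * X ^ j) ≠ 0 := by
        refine e_ne ℓ m hgood j (by omega) F0 (hFne j (by omega)) ?_ hF0orth
        rw [hFdeg j (by omega)]
        exact_mod_cast Nat.lt_succ_self j
      have he1 : ℓ (F1 * X ^ (j+1)) ≠ 0 := by
        refine e_ne ℓ m hgood (j+1) (by omega) F1 (hFne (j+1) le_rfl) ?_ hF1orth
        rw [hFdeg (j+1) le_rfl]
        exact_mod_cast Nat.lt_succ_self (j+1)
      set e0 := ℓ (F0 * X ^ j) with he0d
      set e1 := ℓ (F1 * X ^ (j+1)) with he1d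
      set a : F := -e0 / e1 with ha
      have ha0 : a ≠ 0 := by
        rw [ha, div_ne_zero_iff]
        exact ⟨neg_ne_zero.2 he0, he1⟩
      set c : F := -(a * ℓ (F1 * X ^ (j+2)) + ℓ (F0 * X ^ (j+1))) / e1 with hc
      set A' := Function.update A (j+2) (C a * X + C c) with hA'
      have hAeq : ∀ i, 1 ≤ i → i < j + 2 → A' i = A i := by
        intro i h1 h2
        rw [hA', Function.update_of_ne (by omega)]
      have hfibeq : ∀ n, n ≤ j + 2 → fibP A' n = fibP A n := by
        intro n hn
        exact fibP_congr A' A n (fun i h1 h2 => hAeq i h1 (by omega))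
      have hnew : fibP A' (j+3) = (C a * X + C c) * F1 + F0 := by
        rw [show j+3 = (j+1)+2 from rfl, fibP_add_two, hA', Function.update_self,
          ← hA', hfibeq (j+2) le_rfl, hfibeq (j+1) (by omega), ← hF0, ← hF1]
      refine ⟨A', ?_, ?_⟩
      · intro i h1 h2
        rcases Nat.lt_succ_iff_lt_or_eq.1 (by omega : i < j + 3) with h | rfl
        · rw [hAeq i h1 h]; exact hdeg i h1 (by omega)
        · rw [hA', Function.update_self]
          exact natDegree_linear ha0
      · intro j' hj' i hi
        rcases Nat.lt_succ_iff_lt_or_eq.1 (by omega : j' < j + 3) with h | rfl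
        · rw [hfibeq (j'+1) (by omega)]
          exact horth j' (by omega) i hi
        -- the new level
        rw [hnew]
        have hexp : ((C a * X + C c) * F1 + F0) * X ^ i
            = C a * (F1 * X ^ (i+1)) + (C c * (F1 * X ^ i) + F0 * X ^ i) := by
          ring
        rw [hexp, map_add, map_add, l_C_mul, l_C_mul]
        rcases Nat.lt_succ_iff_lt_or_eq.1 hi with h | rfl
        · rcases Nat.lt_succ_iff_lt_or_eq.1 h with h' | h'
          · -- i < j
            rw [hF1orth (i+1) (by omega), hF1orth i (by omega), hF0orth i h']
            ring
          · -- i = j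
            rw [h', hF1orth j (by omega), ← he1d, ← he0d, ha]
            field_simp
            ring
        · -- i = j + 1
          rw [← he1d, hc]
          field_simp
          ring

theorem part1 (ℓ : Polynomial F →ₗ[F] F) (p : Polynomial F) (m : ℕ)
    (hm : p.natDegree = m) (h0 : 1 ≤ m) (hmonic : p.Monic)
    (hgood : Good ℓ m) (hann : ∀ r : Polynomial F, ℓ (p * r) = 0) :
    ∃ A : ℕ → Polynomial F, (∀ j, 1 ≤ j → j ≤ m → (A j).natDegree = 1) ∧
      ∃ c : F, c ≠ 0 ∧ fibP A (m+1) = C c * p := by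
  obtain ⟨A, hdeg, horth⟩ := exists_A ℓ m hgood m le_rfl
  set Fm := fibP A (m+1) with hFm
  have hFmdeg : Fm.degree = m := fibP_degree A m hdeg m le_rfl
  have hFmne : Fm ≠ 0 := fibP_ne_zero A m hdeg m le_rfl
  set c := Fm.leadingCoeff with hcd
  have hc0 : c ≠ 0 := leadingCoeff_ne_zero.2 hFmne
  have hpne : p ≠ 0 := hmonic.ne_zero
  have hpdeg : p.degree = m := by
    rw [degree_eq_natDegree hpne, hm]
  set g := Fm - C c * p with hg
  have hgdeg : g.degree < m := by
    rw [hg]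
    calc (Fm - C c * p).degree < Fm.degree := by
          apply degree_sub_lt
          · rw [hFmdeg, degree_C_mul hc0, hpdeg]
          · exact hFmne
          · rw [leadingCoeff_mul, leadingCoeff_C, hmonic.leadingCoeff, mul_one]
      _ = m := hFmdeg
  have hgorth : ∀ i, i < m → ℓ (g * X ^ i) = 0 := by
    intro i hi
    rw [hg, sub_mul, map_sub, horth m le_rfl i hi, mul_assoc, l_C_mul, hann,
      mul_zero, sub_zero]
  have hgz : g = 0 := by
    by_contra hgz
    obtain ⟨r, hr, hlr⟩ := hgood m h0 le_rfl g (mem_degreeLT.2 hgdeg) hgz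
    exact hlr (orth_poly ℓ m g hgorth r hr)
  exact ⟨A, hdeg, c, hc0, sub_eq_zero.1 hgz⟩

theorem geom_mul (b : ℕ) (hb : 1 ≤ b) :
    ∀ k, (b - 1) * (∑ j ∈ Finset.range k, b ^ j) = b ^ k - 1 := by
  intro k
  induction k with
  | zero => simp
  | succ k ih =>
    rw [Finset.sum_range_succ, Nat.mul_add, ih]
    have h1 : 1 ≤ b ^ k := Nat.one_le_pow _ _ (by omega)
    have h2 : b ^ (k+1) = b * b ^ k := by rw [pow_succ, mul_comm]
    have h3 : (b - 1) * b ^ k = b * b ^ k - b ^ k := by rw [Nat.sub_mul, one_mul]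
    have h4 : b ^ k ≤ b * b ^ k := Nat.le_mul_of_pos_left _ (by omega)
    generalize hQ : b * b ^ k = Q at h2 h3 h4
    omega

theorem arith (b m : ℕ) (hb : 2 ≤ b) (hm : 1 ≤ m) (hmb : m < b) :
    ∑ k ∈ Finset.Icc 1 m, (∑ j ∈ Finset.range k, b ^ j) * (b ^ (m - k) - 1)
      < b ^ m - 1 := by
  set S := ∑ k ∈ Finset.Icc 1 m, (∑ j ∈ Finset.range k, b ^ j) * (b ^ (m - k) - 1) with hS
  have key : ∀ k ∈ Finset.Icc 1 m,
      (b - 1) * ((∑ j ∈ Finset.range k, b ^ j) * (b ^ (m - k) - 1)) ≤ b ^ m - b := by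
    intro k hk
    rw [Finset.mem_Icc] at hk
    rw [← mul_assoc, geom_mul b (by omega)]
    rcases eq_or_lt_of_le hk.2 with rfl | hlt
    · simp
    · have e1 : (b ^ k - 1) * (b ^ (m - k) - 1) ≤ (b ^ k - 1) * b ^ (m - k) :=
        Nat.mul_le_mul_left _ (Nat.sub_le _ _)
      have e2 : (b ^ k - 1) * b ^ (m - k) = b ^ m - b ^ (m - k) := by
        rw [Nat.sub_mul, one_mul, ← pow_add]
        congr 2
        omega
      have e3 : b ≤ b ^ (m - k) := Nat.le_self_pow (by omega) b
      calc (b ^ k - 1) * (b ^ (m - k) - 1) ≤ b ^ m - b ^ (m - k) := by rw [← e2]; exact e1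
        _ ≤ b ^ m - b := Nat.sub_le_sub_left e3 _
  have hcard : (Finset.Icc 1 m).card = m := by simp
  have hsum : (b - 1) * S ≤ m * (b ^ m - b) := by
    rw [hS, Finset.mul_sum]
    calc ∑ k ∈ Finset.Icc 1 m, (b - 1) * ((∑ j ∈ Finset.range k, b ^ j) * (b ^ (m - k) - 1))
        ≤ ∑ _k ∈ Finset.Icc 1 m, (b ^ m - b) := Finset.sum_le_sum key
      _ = m * (b ^ m - b) := by rw [Finset.sum_const, hcard, smul_eq_mul]
  -- improve m to m - 1 using that the k = m term vanishes
  have htop : S = ∑ k ∈ Finset.Icc 1 (m-1), (∑ j ∈ Finset.range k, b ^ j) * (b ^ (m - k) - 1) := by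
    rw [hS, show m = (m-1)+1 by omega, Finset.sum_Icc_succ_top (by omega)]
    simp [show m - 1 + 1 = m by omega]
  have key' : ∀ k ∈ Finset.Icc 1 (m-1),
      (b - 1) * ((∑ j ∈ Finset.range k, b ^ j) * (b ^ (m - k) - 1)) ≤ b ^ m - b := by
    intro k hk
    rw [Finset.mem_Icc] at hk
    exact key k (Finset.mem_Icc.2 ⟨hk.1, by omega⟩)
  have hsum' : (b - 1) * S ≤ (m - 1) * (b ^ m - b) := by
    rw [htop, Finset.mul_sum]
    calc ∑ k ∈ Finset.Icc 1 (m-1), (b - 1) * ((∑ j ∈ Finset.range k, b ^ j) * (b ^ (m - k) - 1))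
        ≤ ∑ _k ∈ Finset.Icc 1 (m-1), (b ^ m - b) := Finset.sum_le_sum key'
      _ = (m - 1) * (b ^ m - b) := by rw [Finset.sum_const, Nat.card_Icc, smul_eq_mul, show m - 1 + 1 - 1 = m - 1 by omega]
  have hbm : b ≤ b ^ m := Nat.le_self_pow (by omega) b
  have hfinal : (m - 1) * (b ^ m - b) < (b - 1) * (b ^ m - 1) := by
    have h1 : m - 1 ≤ b - 2 := by omega
    calc (m - 1) * (b ^ m - b) ≤ (b - 2) * (b ^ m - b) := Nat.mul_le_mul_right _ h1
      _ < (b - 1) * (b ^ m - 1) := by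
          zify [show (2:ℕ) ≤ b from hb, show (1:ℕ) ≤ b ^ m by omega, hbm, show (1:ℕ) ≤ b by omega]
          nlinarith [sq_nonneg ((b:ℤ) - 1), show (b:ℤ) ≤ (b:ℤ)^m by exact_mod_cast hbm,
            show (2:ℤ) ≤ b by exact_mod_cast hb]
  have : (b - 1) * S < (b - 1) * (b ^ m - 1) := lt_of_le_of_lt hsum' hfinal
  exact Nat.lt_of_mul_lt_mul_left this

set_option maxHeartbeats 1000000 in
theorem exists_good [Fintype F] (p : Polynomial F) (hmonic : p.Monic)
    (hirr : Irreducible p) (h0 : 1 ≤ p.natDegree)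
    (hmb : p.natDegree < Fintype.card F) :
    ∃ ℓ : Polynomial F →ₗ[F] F, Good ℓ p.natDegree ∧
      ∀ r : Polynomial F, ℓ (p * r) = 0 := by
  classical
  haveI := Fact.mk hirr
  have hb2 : 2 ≤ Fintype.card F := Fintype.one_lt_card
  set n := p.natDegree with hn
  set b := Fintype.card F with hbdef
  have hp0 : p ≠ 0 := hmonic.ne_zero
  set K := AdjoinRoot p with hK
  set pb : PowerBasis F K := AdjoinRoot.powerBasis hp0 with hpb
  have hdim : pb.dim = n := by rw [hpb]; rfl
  set ψ : Polynomial F →ₐ[F] K := Polynomial.aeval (AdjoinRoot.root p) with hψ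
  have hψC : ∀ (t : F) (g : Polynomial F), ψ (g * C t) = t • ψ g := by
    intro t g
    rw [map_mul, hψ, aeval_C, Algebra.smul_def, mul_comm]
  have hψzero : ∀ q : Polynomial F, q ≠ 0 → q.natDegree < n → ψ q ≠ 0 := by
    intro q hq hqn h
    rw [hψ, AdjoinRoot.aeval_eq, AdjoinRoot.mk_eq_zero] at h
    exact absurd (Polynomial.natDegree_le_of_dvd h hq) (by omega)
  have hbasis : ∀ i : Fin pb.dim, pb.basis i = ψ (X ^ (i : ℕ)) := by
    intro i
    rw [pb.basis_eq_pow, map_pow, hψ, aeval_X]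
    exact congrArg (· ^ (i : ℕ)) (AdjoinRoot.powerBasis_gen hp0)
  -- a linear functional is determined by its values on `u • basis`, `u ≠ 0`
  have hdet : ∀ (L1 L2 : K →ₗ[F] F) (u : K), u ≠ 0 →
      (∀ i : Fin pb.dim, L1 (u * pb.basis i) = L2 (u * pb.basis i)) → L1 = L2 := by
    intro L1 L2 u hu hagree
    have hM : L1.comp (LinearMap.mulLeft F u) = L2.comp (LinearMap.mulLeft F u) :=
      pb.basis.ext fun i => by simpa using hagree i
    apply LinearMap.ext
    intro y
    have h := DFunLike.congr_fun hM (u⁻¹ * y)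
    simp only [LinearMap.comp_apply, LinearMap.mulLeft_apply] at h
    rwa [← mul_assoc, mul_inv_cancel₀ hu, one_mul] at h
  letI : Fintype (K →ₗ[F] F) :=
    Fintype.ofEquiv _ (pb.basis.constr F : (Fin pb.dim → F) ≃ₗ[F] (K →ₗ[F] F)).toEquiv
  have hcardD : Fintype.card (K →ₗ[F] F) = b ^ n := by
    rw [Fintype.card_congr
      (pb.basis.constr F : (Fin pb.dim → F) ≃ₗ[F] (K →ₗ[F] F)).toEquiv.symm,
      Fintype.card_fun, Fintype.card_fin, hdim, hbdef]
  set P : ℕ → (K →ₗ[F] F) → Prop := fun k L =>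
    ∃ q, q ∈ degreeLT F k ∧ q ≠ 0 ∧ ∀ r ∈ degreeLT F k, L (ψ (q * r)) = 0 with hP
  set Bad : ℕ → Finset (K →ₗ[F] F) := fun k =>
    univ.filter (fun L => L ≠ 0 ∧ P k L) with hBad
  have hBadcard : ∀ k, 1 ≤ k → k ≤ n →
      (Bad k).card ≤ (∑ j ∈ range k, b ^ j) * (b ^ (n - k) - 1) := by
    intro k hk1 hkn
    set wit : (K →ₗ[F] F) → Polynomial F := fun L =>
      if h : P k L then h.choose * C (h.choose.leadingCoeff)⁻¹ else 1 with hwitdef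
    have hwit : ∀ L, P k L → (wit L).Monic ∧ (wit L).natDegree < k ∧
        (∀ r ∈ degreeLT F k, L (ψ (wit L * r)) = 0) := by
      intro L h
      obtain ⟨hq1, hq2, hq3⟩ := h.choose_spec
      have hwL : wit L = h.choose * C (h.choose.leadingCoeff)⁻¹ := dif_pos h
      have hmon : (wit L).Monic := by rw [hwL]; exact monic_mul_leadingCoeff_inv hq2
      refine ⟨hmon, ?_, ?_⟩
      · have hde : (wit L).degree = h.choose.degree := by
          rw [hwL]; exact degree_mul_leadingCoeff_inv _ hq2
        exact (natDegree_lt_iff_degree_lt hmon.ne_zero).2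
          (hde ▸ mem_degreeLT.1 hq1)
      · intro r hr
        rw [hwL, mul_right_comm, hψC, map_smul, hq3 r hr, smul_zero]
    -- the injection target
    haveI : Inhabited ((Σ j : Fin k, (Fin (j : ℕ) → F)) × (Fin (n - k) → F)) :=
      ⟨⟨⟨⟨0, hk1⟩, fun _ => 0⟩, fun _ => 0⟩⟩
    set f : (K →ₗ[F] F) → (Σ j : Fin k, (Fin (j : ℕ) → F)) × (Fin (n - k) → F) :=
      fun L =>
        (⟨⟨min (wit L).natDegree (k-1), by omega⟩, fun i => (wit L).coeff i⟩,
         fun i => L (ψ (wit L * X ^ (k + (i : ℕ))))) with hf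
    set tgt : Finset ((Σ j : Fin k, (Fin (j : ℕ) → F)) × (Fin (n - k) → F)) :=
      univ ×ˢ (univ.filter (fun g => g ≠ 0)) with htgt
    have hXmem : ∀ i : ℕ, i < k → (X : Polynomial F) ^ i ∈ degreeLT F k := by
      intro i hi
      rw [mem_degreeLT, degree_X_pow]
      exact_mod_cast hi
    have hmaps : ∀ L ∈ Bad k, f L ∈ tgt := by
      intro L hL
      rw [hBad, mem_filter] at hL
      obtain ⟨-, hL0, hPL⟩ := hL
      obtain ⟨hmon, hdlt, horth⟩ := hwit L hPL
      have hune : ψ (wit L) ≠ 0 := hψzero _ hmon.ne_zero (by omega)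
      rw [htgt, mem_product]
      refine ⟨mem_univ _, mem_filter.2 ⟨mem_univ _, ?_⟩⟩
      intro hzero
      apply hL0
      apply hdet L 0 (ψ (wit L)) hune
      intro i
      rw [LinearMap.zero_apply, hbasis i, ← map_mul]
      rcases Nat.lt_or_ge (i : ℕ) k with hik | hik
      · exact horth _ (hXmem _ hik)
      · have hi2 : (i : ℕ) - k < n - k := by
          have h2 : (i : ℕ) < pb.dim := i.2
          omega
        have := congr_fun hzero ⟨(i : ℕ) - k, hi2⟩
        simp only [hf, Pi.zero_apply] at this
        rwa [show k + ((i:ℕ) - k) = (i:ℕ) by omega] at this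
    have hinj : Set.InjOn f ↑(Bad k) := by
      intro L1 hL1 L2 hL2 heq
      rw [Finset.mem_coe, hBad, mem_filter] at hL1 hL2
      obtain ⟨-, hL10, hP1⟩ := hL1
      obtain ⟨-, hL20, hP2⟩ := hL2
      obtain ⟨hmon1, hdlt1, horth1⟩ := hwit L1 hP1
      obtain ⟨hmon2, hdlt2, horth2⟩ := hwit L2 hP2
      have hfst := congrArg Prod.fst heq
      have hsnd := congrArg Prod.snd heq
      simp only [hf] at hfst hsnd
      have hval : min (wit L1).natDegree (k-1) = min (wit L2).natDegree (k-1) := by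
        have := congrArg (fun s => (s.1 : ℕ)) hfst
        simpa using this
      have hd : (wit L1).natDegree = (wit L2).natDegree := by omega
      have hgheq : HEq (fun i : Fin (min (wit L1).natDegree (k-1)) => (wit L1).coeff i)
          (fun i : Fin (min (wit L2).natDegree (k-1)) => (wit L2).coeff i) := by
        have := (Sigma.mk.inj_iff).1 hfst
        exact this.2
      have hcoef := (Fin.heq_fun_iff (by rw [hval])).1 hgheq
      have hw : wit L1 = wit L2 := by
        apply Polynomial.ext
        intro i
        rcases lt_trichotomy i (wit L1).natDegree with hi | hi | hi
        · have hi' : i < min (wit L1).natDegree (k-1) := by omega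
          have := hcoef ⟨i, hi'⟩
          simpa using this
        · rw [hi, hmon1.coeff_natDegree, hd, hmon2.coeff_natDegree]
        · rw [coeff_eq_zero_of_natDegree_lt hi,
            coeff_eq_zero_of_natDegree_lt (by omega)]
      have hune : ψ (wit L1) ≠ 0 := hψzero _ hmon1.ne_zero (by omega)
      apply hdet L1 L2 (ψ (wit L1)) hune
      intro i
      rw [hbasis i, ← map_mul]
      rcases Nat.lt_or_ge (i : ℕ) k with hik | hik
      · rw [horth1 _ (hXmem _ hik), hw, horth2 _ (hXmem _ hik)]
      · have hi2 : (i : ℕ) - k < n - k := by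
          have h2 : (i : ℕ) < pb.dim := i.2
          omega
        have := congr_fun hsnd ⟨(i : ℕ) - k, hi2⟩
        simp only [hf, Fin.val_mk] at this
        rw [show (i:ℕ) = k + ((i:ℕ) - k) by omega]
        rw [this, hw]
    have htgtcard : tgt.card = (∑ j ∈ range k, b ^ j) * (b ^ (n - k) - 1) := by
      rw [htgt, Finset.card_product]
      congr 1
      · rw [Finset.card_univ, Fintype.card_sigma]
        rw [← Fin.sum_univ_eq_sum_range (fun j => b ^ j) k]
        apply Finset.sum_congr rfl
        intro j _
        rw [Fintype.card_fun, Fintype.card_fin, hbdef]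
      · rw [Finset.filter_ne', Finset.card_erase_of_mem (mem_univ _),
          Finset.card_univ, Fintype.card_fun, Fintype.card_fin, hbdef]
    calc (Bad k).card ≤ tgt.card := Finset.card_le_card_of_injOn f hmaps hinj
      _ = _ := htgtcard
  -- assemble
  set BadAll : Finset (K →ₗ[F] F) := (Finset.Icc 1 n).biUnion Bad with hBadAll
  have hBadAllcard : BadAll.card < b ^ n - 1 := by
    calc BadAll.card ≤ ∑ k ∈ Finset.Icc 1 n, (Bad k).card := Finset.card_biUnion_le
      _ ≤ ∑ k ∈ Finset.Icc 1 n, (∑ j ∈ range k, b ^ j) * (b ^ (n - k) - 1) := by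
          apply Finset.sum_le_sum
          intro k hk
          rw [Finset.mem_Icc] at hk
          exact hBadcard k hk.1 hk.2
      _ < b ^ n - 1 := arith b n hb2 h0 hmb
  have hsub : BadAll ⊆ univ.erase 0 := by
    intro L hL
    rw [hBadAll, Finset.mem_biUnion] at hL
    obtain ⟨k, -, hLk⟩ := hL
    rw [hBad, mem_filter] at hLk
    exact Finset.mem_erase.2 ⟨hLk.2.1, mem_univ _⟩
  have herase : (univ.erase (0 : K →ₗ[F] F)).card = b ^ n - 1 := by
    rw [Finset.card_erase_of_mem (mem_univ _), Finset.card_univ, hcardD]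
  have hex : ((univ.erase (0 : K →ₗ[F] F)) \ BadAll).Nonempty := by
    apply Finset.card_pos.1
    rw [Finset.card_sdiff_of_subset hsub, herase]
    omega
  obtain ⟨L, hLmem⟩ := hex
  rw [Finset.mem_sdiff, Finset.mem_erase] at hLmem
  obtain ⟨⟨hL0, -⟩, hLnotbad⟩ := hLmem
  have hLgood : ∀ k, 1 ≤ k → k ≤ n → ¬ P k L := by
    intro k h1 h2 hPk
    apply hLnotbad
    rw [hBadAll, Finset.mem_biUnion]
    exact ⟨k, Finset.mem_Icc.2 ⟨h1, h2⟩, by rw [hBad]; exact mem_filter.2 ⟨mem_univ _, hL0, hPk⟩⟩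
  refine ⟨L.comp ψ.toLinearMap, ?_, ?_⟩
  · intro k h1 h2 q hq hq0
    have := hLgood k h1 h2
    simp only [hP] at this
    push_neg at this
    obtain ⟨r, hr, hrr⟩ := this q hq hq0
    exact ⟨r, hr, hrr⟩
  · intro r
    have : ψ (p * r) = 0 := by
      rw [map_mul, hψ, AdjoinRoot.aeval_eq, AdjoinRoot.mk_self, zero_mul]
    simp [LinearMap.comp_apply, this]

end Friesen

/-- **Friesen's theorem.** Let `F` be a finite field with `b` elements and `p`
a monic irreducible polynomial with `0 < m = deg p < b`. Then the orthogonal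
multiplicity of `p` is positive: some nonzero constant multiple of `p` is a
Fibonacci polynomial `F_m` built from degree-one polynomials `A_1, …, A_m`;
consequently there exists `q` of degree `< m` all of whose partial quotients in
the continued fraction expansion of `q/p` have degree one. -/
theorem friesen {F : Type*} [Field F] [Fintype F] (b : ℕ)
    (hb : Fintype.card F = b)
    (p : Polynomial F) (hmonic : p.Monic) (hirr : Irreducible p)
    (m : ℕ) (hm : m = p.natDegree) (h0 : 0 < m) (hmb : m < b) :
    (∃ A : ℕ → Polynomial F, (∀ k, 1 ≤ k → k ≤ m → (A k).natDegree = 1) ∧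
      ∃ c : F, c ≠ 0 ∧ fibP A (m + 1) = Polynomial.C c * p) ∧
    (∃ q : Polynomial F, q ≠ 0 ∧ q.natDegree < m ∧
      ∃ L : List (Polynomial F), (∀ a ∈ L, a.natDegree = 1) ∧
        algebraMap (Polynomial F) (RatFunc F) q /
            algebraMap (Polynomial F) (RatFunc F) p
          = cfVal ((0 : Polynomial F) :: L)) := by
  classical
  subst hb
  subst hm
  set m := p.natDegree with hmdef
  obtain ⟨ℓ, hgood, hann⟩ := Friesen.exists_good p hmonic hirr h0 hmb
  obtain ⟨A, hdeg, c, hc0, hFm⟩ :=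
    Friesen.part1 ℓ p m rfl h0 hmonic hgood hann
  have hFm1ne : fibP A m ≠ 0 := by
    have := Friesen.fibP_ne_zero A m hdeg (m-1) (by omega)
    rwa [show m - 1 + 1 = m by omega] at this
  have hFm1deg : (fibP A m).natDegree = m - 1 := by
    have := Friesen.fibP_natDegree A m hdeg (m-1) (by omega)
    rwa [show m - 1 + 1 = m by omega] at this
  have hpne : p ≠ 0 := hmonic.ne_zero
  have hcast : ∀ g : Polynomial F, g ≠ 0 →
      algebraMap (Polynomial F) (RatFunc F) g ≠ 0 := by
    intro g hg
    simpa using hg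
  have hcinv : (Polynomial.C c⁻¹ : Polynomial F) ≠ 0 := by
    simpa using inv_ne_zero hc0
  refine ⟨⟨A, hdeg, c, hc0, hFm⟩,
    Polynomial.C c⁻¹ * fibP A m, mul_ne_zero hcinv hFm1ne, ?_, Friesen.lst A m, ?_, ?_⟩
  · rw [Polynomial.natDegree_C_mul (inv_ne_zero hc0), hFm1deg]
    omega
  · intro a ha
    obtain ⟨i, h1, h2, rfl⟩ := Friesen.mem_lst A m a ha
    exact hdeg i h1 h2
  · have hzf : cfVal ((0 : Polynomial F) :: Friesen.lst A m)
        = (cfVal (Friesen.lst A m))⁻¹ := by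
      show algebraMap (Polynomial F) (RatFunc F) 0 + _ = _
      rw [map_zero, zero_add]
    rw [hzf, Friesen.cfVal_lst A m hdeg, inv_div, hFm]
    have hCcne : algebraMap (Polynomial F) (RatFunc F) (Polynomial.C c * p) ≠ 0 :=
      hcast _ (mul_ne_zero (by simpa using hc0) hpne)
    rw [div_eq_div_iff (hcast p hpne) hCcne, ← map_mul, ← map_mul]
    congr 1
    rw [mul_mul_mul_comm, ← Polynomial.C_mul, inv_mul_cancel₀ hc0, Polynomial.C_1, one_mul]
end

section
/- Let m ≥ 3 be an integer and let F_2 be the field with 2 elements. There exists no invertible m×m matrix A over F_2 such that both (i) the multiplicative order of A equals 2^m − 1 (maximal periodicity), and (ii) for all nonnegative integers d_1, d_2, d_3 with d_1 + d_2 + d_3 = m, the m×m matrix whose rows consist of the first d_1 rows of the identity matrix I_m, the first d_2 rows of A, and the first d_3 rows of A², is nonsingular (this condition is the t-value-zero condition for dimension s = 3 of the digital net over F_2 with generating matrices (I_m, A, A²)). -/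
open Matrix Submodule Set Module

namespace KMS

variable {m : ℕ}

abbrev Vm (m : ℕ) := Fin m → ZMod 2

def rowSet (M : Matrix (Fin m) (Fin m) (ZMod 2)) (d : ℕ) : Set (Vm m) :=
  {v | ∃ i : Fin m, (i : ℕ) < d ∧ v = M i}

def rowSpan (M : Matrix (Fin m) (Fin m) (ZMod 2)) (d : ℕ) : Submodule (ZMod 2) (Vm m) :=
  span (ZMod 2) (rowSet M d)

lemma two_zero : ∀ t : ZMod 2, t + t = 0 := by decide

lemma zmod2_cases : ∀ t : ZMod 2, t = 0 ∨ t = 1 := by decide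

lemma addV (v : Vm m) : v + v = 0 := funext fun j => two_zero (v j)

lemma range_eq (M : Matrix (Fin m) (Fin m) (ZMod 2)) {d : ℕ} (h : d ≤ m) :
    Set.range (fun i : Fin d => M (Fin.castLE h i)) = rowSet M d := by
  ext v
  constructor
  · rintro ⟨i, rfl⟩; exact ⟨Fin.castLE h i, i.isLt, rfl⟩
  · rintro ⟨i, hi, rfl⟩
    exact ⟨⟨(i : ℕ), hi⟩, by congr⟩

lemma rowSpan_mono (M : Matrix (Fin m) (Fin m) (ZMod 2)) {d d' : ℕ} (h : d ≤ d') :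
    rowSpan M d ≤ rowSpan M d' :=
  span_mono fun v ⟨i, hi, hv⟩ => ⟨i, lt_of_lt_of_le hi h, hv⟩

lemma rowSpan_zero (M : Matrix (Fin m) (Fin m) (ZMod 2)) : rowSpan M 0 = ⊥ := by
  have h : rowSet M 0 = ∅ := by ext v; simp [rowSet]
  rw [rowSpan, h, span_empty]

lemma rowSpan_succ (M : Matrix (Fin m) (Fin m) (ZMod 2)) {d : ℕ} (h : d < m) :
    rowSpan M (d + 1) = rowSpan M d ⊔ span (ZMod 2) {M ⟨d, h⟩} := by
  rw [rowSpan, rowSpan, ← span_union]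
  congr 1
  ext v
  constructor
  · rintro ⟨i, hi, rfl⟩
    rcases Nat.lt_succ_iff_lt_or_eq.mp hi with h' | h'
    · exact Or.inl ⟨i, h', rfl⟩
    · right
      have hieq : i = ⟨d, h⟩ := Fin.ext h'
      rw [hieq]; rfl
  · rintro (⟨i, hi, rfl⟩ | hv)
    · exact ⟨i, Nat.lt_succ_of_lt hi, rfl⟩
    · rw [Set.mem_singleton_iff] at hv
      exact ⟨⟨d, h⟩, Nat.lt_succ_self d, hv⟩

lemma one_row (i : Fin m) : (1 : Matrix (Fin m) (Fin m) (ZMod 2)) i = Pi.single i 1 := by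
  ext j
  rw [Matrix.one_apply, Pi.single_apply]
  exact if_congr eq_comm rfl rfl

lemma mem_rowSpan_one_coord {d : ℕ} {v : Vm m} (hv : v ∈ rowSpan 1 d) (j : Fin m)
    (hj : d ≤ (j : ℕ)) : v j = 0 := by
  have hle : rowSpan (m := m) 1 d ≤
      LinearMap.ker (LinearMap.proj (R := ZMod 2) (φ := fun _ : Fin m => ZMod 2) j) := by
    rw [rowSpan, span_le]
    rintro w ⟨i, hi, rfl⟩
    have hij : i ≠ j := by
      intro h; rw [h] at hi; omega
    simp [LinearMap.mem_ker, Matrix.one_apply_ne hij]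
  simpa using hle hv

lemma linIndep_one {d : ℕ} (h : d ≤ m) :
    LinearIndependent (ZMod 2)
      (fun i : Fin d => (1 : Matrix (Fin m) (Fin m) (ZMod 2)) (Fin.castLE h i)) := by
  have h1 := (Pi.basisFun (ZMod 2) (Fin m)).linearIndependent
  have h2 := h1.comp (Fin.castLE h) (Fin.castLE_injective h)
  convert h2 using 1
  funext i
  rw [one_row]
  simp [Pi.basisFun_apply]

lemma finrank_rowSpan_one {d : ℕ} (h : d ≤ m) :
    finrank (ZMod 2) (rowSpan (m := m) 1 d) = d := by
  rw [rowSpan, ← range_eq 1 h, finrank_span_eq_card (linIndep_one h), Fintype.card_fin]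

lemma finrank_Vm : finrank (ZMod 2) (Vm m) = m := by
  simp [Module.finrank_pi]

lemma mem_drop {d : ℕ} (h : d < m) {v : Vm m} (hv : v ∈ rowSpan 1 (d + 1))
    (h0 : v ⟨d, h⟩ = 0) : v ∈ rowSpan (m := m) 1 d := by
  rw [rowSpan_succ 1 h] at hv
  rcases Submodule.mem_sup.mp hv with ⟨u, hu, z, hz, huz⟩
  rcases mem_span_singleton.mp hz with ⟨r, rfl⟩
  have huc : u ⟨d, h⟩ = 0 := mem_rowSpan_one_coord hu ⟨d, h⟩ (le_refl d)
  have hval : v ⟨d, h⟩ = r := by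
    rw [← huz]
    simp [one_row, Pi.single_apply, huc]
  have hr : r = 0 := hval.symm.trans h0
  rw [← huz, hr, zero_smul, add_zero]
  exact hu

lemma rowSpan_eq_map (M : Matrix (Fin m) (Fin m) (ZMod 2)) (d : ℕ) :
    rowSpan M d = Submodule.map M.vecMulLinear (rowSpan 1 d) := by
  rw [rowSpan, rowSpan, Submodule.map_span]
  congr 1
  ext v
  constructor
  · rintro ⟨i, hi, rfl⟩
    refine ⟨(1 : Matrix (Fin m) (Fin m) (ZMod 2)) i, ⟨i, hi, rfl⟩, ?_⟩
    rw [one_row]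
    simp
    rfl
  · rintro ⟨w, ⟨i, hi, rfl⟩, rfl⟩
    refine ⟨i, hi, ?_⟩
    rw [one_row]
    simp
    rfl

lemma vecMulLinear_mul (M N : Matrix (Fin m) (Fin m) (ZMod 2)) :
    (M * N).vecMulLinear = N.vecMulLinear.comp M.vecMulLinear := by
  ext v j
  simp [← Matrix.vecMul_vecMul]

lemma vecMulLinear_injective {M : Matrix (Fin m) (Fin m) (ZMod 2)} (hM : IsUnit M) :
    Function.Injective M.vecMulLinear := by
  intro v w h
  simp only [Matrix.vecMulLinear_apply] at h
  have h1 : M * M⁻¹ = 1 := Matrix.mul_nonsing_inv M ((Matrix.isUnit_iff_isUnit_det M).mp hM)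
  have h2 := congrArg (fun x => Matrix.vecMul x M⁻¹) h
  simpa [Matrix.vecMul_vecMul, h1] using h2

noncomputable def vecMulEquiv {M : Matrix (Fin m) (Fin m) (ZMod 2)} (hM : IsUnit M) :
    Vm m ≃ₗ[ZMod 2] Vm m :=
  LinearEquiv.ofLinear M.vecMulLinear M⁻¹.vecMulLinear
    (by
      have h1 : M⁻¹ * M = 1 := Matrix.nonsing_inv_mul M ((Matrix.isUnit_iff_isUnit_det M).mp hM)
      rw [← vecMulLinear_mul, h1]
      ext v j
      simp)
    (by
      have h1 : M * M⁻¹ = 1 := Matrix.mul_nonsing_inv M ((Matrix.isUnit_iff_isUnit_det M).mp hM)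
      rw [← vecMulLinear_mul, h1]
      ext v j
      simp)

lemma vecMulEquiv_coe {M : Matrix (Fin m) (Fin m) (ZMod 2)} (hM : IsUnit M) :
    (vecMulEquiv hM : Vm m →ₗ[ZMod 2] Vm m) = M.vecMulLinear := rfl

lemma finrank_rowSpan {M : Matrix (Fin m) (Fin m) (ZMod 2)} (hM : IsUnit M) {d : ℕ}
    (h : d ≤ m) : finrank (ZMod 2) (rowSpan M d) = d := by
  rw [rowSpan_eq_map, ← vecMulEquiv_coe hM, LinearEquiv.finrank_map_eq,
    finrank_rowSpan_one h]

def σG (a b c : ℕ) : (Fin b ⊕ (Fin a ⊕ Fin c)) ≃ (Fin a ⊕ (Fin b ⊕ Fin c)) where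
  toFun x := match x with
    | .inl y => .inr (.inl y)
    | .inr (.inl y) => .inl y
    | .inr (.inr y) => .inr (.inr y)
  invFun x := match x with
    | .inl y => .inr (.inl y)
    | .inr (.inl y) => .inl y
    | .inr (.inr y) => .inr (.inr y)
  left_inv := by rintro (y | y | y) <;> rfl
  right_inv := by rintro (y | y | y) <;> rfl

def σH (a b c : ℕ) : (Fin c ⊕ (Fin a ⊕ Fin b)) ≃ (Fin a ⊕ (Fin b ⊕ Fin c)) where
  toFun x := match x with
    | .inl y => .inr (.inr y)
    | .inr (.inl y) => .inl y
    | .inr (.inr y) => .inr (.inl y)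
  invFun x := match x with
    | .inl y => .inr (.inl y)
    | .inr (.inl y) => .inr (.inr y)
    | .inr (.inr y) => .inl y
  left_inv := by rintro (y | y | y) <;> rfl
  right_inv := by rintro (y | y | y) <;> rfl

section Net

variable {A : Matrix (Fin m) (Fin m) (ZMod 2)}
variable
  (hnet : ∀ (d₁ d₂ d₃ : ℕ) (hd : d₁ + d₂ + d₃ = m),
    LinearIndependent (ZMod 2)
      (Sum.elim
        (fun i : Fin d₁ => (1 : Matrix (Fin m) (Fin m) (ZMod 2))
          (Fin.castLE (by linarith) i))
        (Sum.elim
          (fun i : Fin d₂ => A (Fin.castLE (by linarith) i))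
          (fun i : Fin d₃ => (A * A) (Fin.castLE (by linarith) i)))))

include hnet

lemma net_dF (d₁ d₂ d₃ : ℕ) (hd : d₁ + d₂ + d₃ = m) :
    Disjoint (rowSpan (m := m) 1 d₁) (rowSpan A d₂ ⊔ rowSpan (A * A) d₃) := by
  have h := hnet d₁ d₂ d₃ hd
  have h3 := (linearIndependent_sum.mp h).2.2
  have e1 : (Sum.elim
        (fun i : Fin d₁ => (1 : Matrix (Fin m) (Fin m) (ZMod 2))
          (Fin.castLE (by linarith : d₁ ≤ m) i))
        (Sum.elim
          (fun i : Fin d₂ => A (Fin.castLE (by linarith : d₂ ≤ m) i))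
          (fun i : Fin d₃ => (A * A) (Fin.castLE (by linarith : d₃ ≤ m) i)))) ∘ Sum.inl
      = (fun i : Fin d₁ => (1 : Matrix (Fin m) (Fin m) (ZMod 2))
          (Fin.castLE (by linarith : d₁ ≤ m) i)) := rfl
  have e2 : (Sum.elim
        (fun i : Fin d₁ => (1 : Matrix (Fin m) (Fin m) (ZMod 2))
          (Fin.castLE (by linarith : d₁ ≤ m) i))
        (Sum.elim
          (fun i : Fin d₂ => A (Fin.castLE (by linarith : d₂ ≤ m) i))
          (fun i : Fin d₃ => (A * A) (Fin.castLE (by linarith : d₃ ≤ m) i)))) ∘ Sum.inr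
      = (Sum.elim
          (fun i : Fin d₂ => A (Fin.castLE (by linarith : d₂ ≤ m) i))
          (fun i : Fin d₃ => (A * A) (Fin.castLE (by linarith : d₃ ≤ m) i))) := rfl
  rw [e1, e2, Set.Sum.elim_range, span_union, range_eq A (by linarith : d₂ ≤ m),
    range_eq 1 (by linarith : d₁ ≤ m), range_eq (A * A) (by linarith : d₃ ≤ m)] at h3
  exact h3

lemma net_dG (d₁ d₂ d₃ : ℕ) (hd : d₁ + d₂ + d₃ = m) :
    Disjoint (rowSpan A d₂) (rowSpan (m := m) 1 d₁ ⊔ rowSpan (A * A) d₃) := by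
  have h := (hnet d₁ d₂ d₃ hd).comp (σG d₁ d₂ d₃) (Equiv.injective _)
  have h3 := (linearIndependent_sum.mp h).2.2
  have r1 : ((Sum.elim
        (fun i : Fin d₁ => (1 : Matrix (Fin m) (Fin m) (ZMod 2))
          (Fin.castLE (by linarith : d₁ ≤ m) i))
        (Sum.elim
          (fun i : Fin d₂ => A (Fin.castLE (by linarith : d₂ ≤ m) i))
          (fun i : Fin d₃ => (A * A) (Fin.castLE (by linarith : d₃ ≤ m) i)))) ∘ (σG d₁ d₂ d₃)) ∘ Sum.inl
      = (fun i : Fin d₂ => A (Fin.castLE (by linarith : d₂ ≤ m) i)) := by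
    funext y; rfl
  have r2 : ((Sum.elim
        (fun i : Fin d₁ => (1 : Matrix (Fin m) (Fin m) (ZMod 2))
          (Fin.castLE (by linarith : d₁ ≤ m) i))
        (Sum.elim
          (fun i : Fin d₂ => A (Fin.castLE (by linarith : d₂ ≤ m) i))
          (fun i : Fin d₃ => (A * A) (Fin.castLE (by linarith : d₃ ≤ m) i)))) ∘ (σG d₁ d₂ d₃)) ∘ Sum.inr
      = (Sum.elim
          (fun i : Fin d₁ => (1 : Matrix (Fin m) (Fin m) (ZMod 2))
            (Fin.castLE (by linarith : d₁ ≤ m) i))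
          (fun i : Fin d₃ => (A * A) (Fin.castLE (by linarith : d₃ ≤ m) i))) := by
    funext x; rcases x with y | y <;> rfl
  rw [r1, r2, Set.Sum.elim_range, span_union, range_eq A (by linarith : d₂ ≤ m),
    range_eq 1 (by linarith : d₁ ≤ m), range_eq (A * A) (by linarith : d₃ ≤ m)] at h3
  exact h3

lemma net_dH (d₁ d₂ d₃ : ℕ) (hd : d₁ + d₂ + d₃ = m) :
    Disjoint (rowSpan (A * A) d₃) (rowSpan (m := m) 1 d₁ ⊔ rowSpan A d₂) := by
  have h := (hnet d₁ d₂ d₃ hd).comp (σH d₁ d₂ d₃) (Equiv.injective _)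
  have h3 := (linearIndependent_sum.mp h).2.2
  have r1 : ((Sum.elim
        (fun i : Fin d₁ => (1 : Matrix (Fin m) (Fin m) (ZMod 2))
          (Fin.castLE (by linarith : d₁ ≤ m) i))
        (Sum.elim
          (fun i : Fin d₂ => A (Fin.castLE (by linarith : d₂ ≤ m) i))
          (fun i : Fin d₃ => (A * A) (Fin.castLE (by linarith : d₃ ≤ m) i)))) ∘ (σH d₁ d₂ d₃)) ∘ Sum.inl
      = (fun i : Fin d₃ => (A * A) (Fin.castLE (by linarith : d₃ ≤ m) i)) := by
    funext y; rfl
  have r2 : ((Sum.elim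
        (fun i : Fin d₁ => (1 : Matrix (Fin m) (Fin m) (ZMod 2))
          (Fin.castLE (by linarith : d₁ ≤ m) i))
        (Sum.elim
          (fun i : Fin d₂ => A (Fin.castLE (by linarith : d₂ ≤ m) i))
          (fun i : Fin d₃ => (A * A) (Fin.castLE (by linarith : d₃ ≤ m) i)))) ∘ (σH d₁ d₂ d₃)) ∘ Sum.inr
      = (Sum.elim
          (fun i : Fin d₁ => (1 : Matrix (Fin m) (Fin m) (ZMod 2))
            (Fin.castLE (by linarith : d₁ ≤ m) i))
          (fun i : Fin d₂ => A (Fin.castLE (by linarith : d₂ ≤ m) i))) := by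
    funext x; rcases x with y | y <;> rfl
  rw [r1, r2, Set.Sum.elim_range, span_union, range_eq (A * A) (by linarith : d₃ ≤ m),
    range_eq 1 (by linarith : d₁ ≤ m), range_eq A (by linarith : d₂ ≤ m)] at h3
  exact h3

lemma net_top (d₁ d₂ d₃ : ℕ) (hd : d₁ + d₂ + d₃ = m) :
    rowSpan (m := m) 1 d₁ ⊔ (rowSpan A d₂ ⊔ rowSpan (A * A) d₃) = ⊤ := by
  have h := hnet d₁ d₂ d₃ hd
  have hcard := finrank_span_eq_card h
  have hr : Set.range (Sum.elim
        (fun i : Fin d₁ => (1 : Matrix (Fin m) (Fin m) (ZMod 2))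
          (Fin.castLE (by linarith : d₁ ≤ m) i))
        (Sum.elim
          (fun i : Fin d₂ => A (Fin.castLE (by linarith : d₂ ≤ m) i))
          (fun i : Fin d₃ => (A * A) (Fin.castLE (by linarith : d₃ ≤ m) i))))
      = rowSet (m := m) 1 d₁ ∪ (rowSet A d₂ ∪ rowSet (A * A) d₃) := by
    simp only [Set.Sum.elim_range]
    rw [range_eq 1 (by linarith : d₁ ≤ m), range_eq A (by linarith : d₂ ≤ m),
      range_eq (A * A) (by linarith : d₃ ≤ m)]
  rw [hr] at hcard
  have hspan : span (ZMod 2) (rowSet (m := m) 1 d₁ ∪ (rowSet A d₂ ∪ rowSet (A * A) d₃))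
      = rowSpan (m := m) 1 d₁ ⊔ (rowSpan A d₂ ⊔ rowSpan (A * A) d₃) := by
    rw [span_union, span_union]; rfl
  rw [hspan] at hcard
  apply Submodule.eq_top_of_finrank_eq
  rw [hcard, finrank_Vm]
  simp only [Fintype.card_sum, Fintype.card_fin]
  omega

omit hnet in
lemma rowSpan_mulA (M : Matrix (Fin m) (Fin m) (ZMod 2)) (d : ℕ) :
    rowSpan (M * A) d = Submodule.map A.vecMulLinear (rowSpan M d) := by
  rw [rowSpan_eq_map (M * A), vecMulLinear_mul, rowSpan_eq_map M, Submodule.map_comp]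

omit hnet in
lemma rowSpan_A_eq (d : ℕ) :
    rowSpan A d = Submodule.map A.vecMulLinear (rowSpan (m := m) 1 d) := by
  rw [← rowSpan_eq_map]

lemma net_dK (hA : IsUnit A) (a b c : ℕ) (h : a + b + c = m) :
    rowSpan (A * A * A) c ⊓ (rowSpan A a ⊔ rowSpan (A * A) b) = ⊥ := by
  have h1 : rowSpan (A * A * A) c = Submodule.map A.vecMulLinear (rowSpan (A * A) c) :=
    rowSpan_mulA (A * A) c
  have h2 : rowSpan A a = Submodule.map A.vecMulLinear (rowSpan (m := m) 1 a) :=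
    rowSpan_A_eq a
  have h3 : rowSpan (A * A) b = Submodule.map A.vecMulLinear (rowSpan A b) :=
    rowSpan_mulA A b
  rw [h1, h2, h3, ← Submodule.map_sup, ← Submodule.map_inf _ (vecMulLinear_injective hA),
    disjoint_iff.mp (net_dH hnet a b c h), Submodule.map_bot]

lemma flag_step (hA : IsUnit A) (c : ℕ) (hc : c + 1 ≤ m)
    (ihc : rowSpan (A * A * A) c = rowSpan (m := m) 1 c) :
    rowSpan (A * A * A) (c + 1) = rowSpan (m := m) 1 (c + 1) := by
  have hcm : c < m := hc
  have hA3 : IsUnit (A * A * A) := (hA.mul hA).mul hA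
  -- the distinguished vector e = e_c
  set e : Vm m := (1 : Matrix (Fin m) (Fin m) (ZMod 2)) ⟨c, hcm⟩ with he
  have heF1 : e ∈ rowSpan (m := m) 1 (c + 1) :=
    subset_span ⟨⟨c, hcm⟩, Nat.lt_succ_self c, rfl⟩
  have heF0 : e ∉ rowSpan (m := m) 1 c := by
    intro hmem
    have h0 := mem_rowSpan_one_coord hmem ⟨c, hcm⟩ (le_refl c)
    rw [he, Matrix.one_apply_eq] at h0
    exact one_ne_zero h0
  have hene : e ≠ 0 := fun h => heF0 (h ▸ zero_mem _)
  -- modular helper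
  have hmod : ∀ X W : Submodule (ZMod 2) (Vm m), rowSpan (m := m) 1 c ≤ X → X ⊓ W = ⊥ →
      X ⊓ (rowSpan (m := m) 1 c ⊔ W) = rowSpan (m := m) 1 c := by
    intro X W hFX hXW
    rw [inf_comm, sup_inf_assoc_of_le _ hFX, inf_comm, hXW, sup_bot_eq]
  -- x not in U a facts
  have hFU : ∀ a, a ≤ m - (c + 1) → ∀ x, x ∈ rowSpan (m := m) 1 (c + 1) →
      x ∉ rowSpan (m := m) 1 c →
      x ∉ rowSpan (m := m) 1 c ⊔ (rowSpan A a ⊔ rowSpan (A * A) (m - (c + 1) - a)) := by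
    intro a ha x hx1 hx0 hxU
    have hbot : rowSpan (m := m) 1 (c + 1) ⊓
        (rowSpan A a ⊔ rowSpan (A * A) (m - (c + 1) - a)) = ⊥ :=
      disjoint_iff.mp (net_dF hnet (c + 1) a (m - (c + 1) - a) (by omega))
    have hres := hmod (rowSpan (m := m) 1 (c + 1)) _ (rowSpan_mono 1 (Nat.le_succ c)) hbot
    exact hx0 (hres ▸ (Submodule.mem_inf.mpr ⟨hx1, hxU⟩))
  have hKU : ∀ a, a ≤ m - (c + 1) → ∀ y, y ∈ rowSpan (A * A * A) (c + 1) →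
      y ∉ rowSpan (m := m) 1 c →
      y ∉ rowSpan (m := m) 1 c ⊔ (rowSpan A a ⊔ rowSpan (A * A) (m - (c + 1) - a)) := by
    intro a ha y hy1 hy0 hyU
    have hbot : rowSpan (A * A * A) (c + 1) ⊓
        (rowSpan A a ⊔ rowSpan (A * A) (m - (c + 1) - a)) = ⊥ :=
      net_dK hnet hA a (m - (c + 1) - a) (c + 1) (by omega)
    have hle : rowSpan (m := m) 1 c ≤ rowSpan (A * A * A) (c + 1) := by
      rw [← ihc]; exact rowSpan_mono _ (Nat.le_succ c)
    have hres := hmod (rowSpan (A * A * A) (c + 1)) _ hle hbot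
    exact hy0 (hres ▸ (Submodule.mem_inf.mpr ⟨hy1, hyU⟩))
  -- top fact
  have htopU : ∀ a, a ≤ m - (c + 1) →
      (rowSpan (m := m) 1 c ⊔ (rowSpan A a ⊔ rowSpan (A * A) (m - (c + 1) - a)))
        ⊔ span (ZMod 2) {e} = ⊤ := by
    intro a ha
    have htop := net_top hnet (c + 1) a (m - (c + 1) - a) (by omega)
    rw [rowSpan_succ 1 hcm] at htop
    rw [← htop, ← he]
    rw [sup_right_comm]
  -- e not in U a
  have heU : ∀ a, a ≤ m - (c + 1) →
      e ∉ rowSpan (m := m) 1 c ⊔ (rowSpan A a ⊔ rowSpan (A * A) (m - (c + 1) - a)) :=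
    fun a ha => hFU a ha e heF1 heF0
  -- coset trick
  have hcoset : ∀ a, a ≤ m - (c + 1) → ∀ x y : Vm m,
      x ∉ rowSpan (m := m) 1 c ⊔ (rowSpan A a ⊔ rowSpan (A * A) (m - (c + 1) - a)) →
      y ∉ rowSpan (m := m) 1 c ⊔ (rowSpan A a ⊔ rowSpan (A * A) (m - (c + 1) - a)) →
      x + y ∈ rowSpan (m := m) 1 c ⊔ (rowSpan A a ⊔ rowSpan (A * A) (m - (c + 1) - a)) := by
    intro a ha x y hx hy
    set U := rowSpan (m := m) 1 c ⊔ (rowSpan A a ⊔ rowSpan (A * A) (m - (c + 1) - a)) with hUdef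
    have heUa : e ∉ U := by rw [hUdef]; exact heU a ha
    have hUne : U ≠ ⊤ := by
      intro h
      exact heUa (h ▸ Submodule.mem_top)
    have h1 := Submodule.finrank_sup_add_finrank_inf_eq U (span (ZMod 2) {e})
    rw [htopU a ha, finrank_top, finrank_Vm, finrank_span_singleton hene] at h1
    have hUlt : finrank (ZMod 2) U < m := by
      have : U < ⊤ := lt_top_iff_ne_top.mpr hUne
      have h2 := Submodule.finrank_lt_finrank_of_lt this
      rwa [finrank_top, finrank_Vm] at h2
    have hUrank : finrank (ZMod 2) U = m - 1 := by omega
    have hxtop : U ⊔ span (ZMod 2) {x} = ⊤ := by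
      have hlt : U < U ⊔ span (ZMod 2) {x} := by
        refine lt_of_le_of_ne le_sup_left fun h => hx ?_
        rw [h]
        exact Submodule.mem_sup_right (mem_span_singleton_self x)
      have h2 := Submodule.finrank_lt_finrank_of_lt hlt
      have h3 : finrank (ZMod 2) ↥(U ⊔ span (ZMod 2) {x}) ≤ m := by
        have := Submodule.finrank_le (U ⊔ span (ZMod 2) {x})
        rwa [finrank_Vm] at this
      apply Submodule.eq_top_of_finrank_eq
      rw [finrank_Vm]
      omega
    have hymem : y ∈ U ⊔ span (ZMod 2) {x} := hxtop ▸ Submodule.mem_top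
    rcases Submodule.mem_sup.mp hymem with ⟨u, hu, z, hz, huz⟩
    rcases mem_span_singleton.mp hz with ⟨r, rfl⟩
    rcases zmod2_cases r with hr | hr
    · exfalso
      rw [hr, zero_smul, add_zero] at huz
      exact hy (huz ▸ hu)
    · have hxy : x + y = u := by
        rw [← huz, hr, one_smul, add_comm u x, ← add_assoc, addV x, zero_add]
      exact hxy ▸ hu
  -- chain lemma
  have hchain : ∀ z : Vm m,
      (∀ a, a ≤ m - (c + 1) →
        z ∈ rowSpan (m := m) 1 c ⊔ (rowSpan A a ⊔ rowSpan (A * A) (m - (c + 1) - a))) →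
      z ∈ rowSpan (m := m) 1 c := by
    intro z hz
    have aux : ∀ a, a ≤ m - (c + 1) →
        z ∈ rowSpan (A * A) (m - (c + 1) - a) ⊔ rowSpan (m := m) 1 c := by
      intro a
      induction a with
      | zero =>
        intro _
        have h0 := hz 0 (Nat.zero_le _)
        rw [rowSpan_zero A, bot_sup_eq, sup_comm] at h0
        exact h0
      | succ a iha =>
        intro ha1
        have hz1 := iha (by omega)
        have hz2 := hz (a + 1) ha1
        rcases Submodule.mem_sup.mp hz2 with ⟨f, hf, w, hw, hfw⟩
        rcases Submodule.mem_sup.mp hw with ⟨g, hg, hvec, hh, hgh⟩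
        have hgz : g = z - f - hvec := by rw [← hfw, ← hgh]; abel
        have hgmem : g ∈ rowSpan (A * A) (m - (c + 1) - a) ⊔ rowSpan (m := m) 1 c := by
          rw [hgz]
          refine Submodule.sub_mem _ (Submodule.sub_mem _ hz1 (Submodule.mem_sup_right hf)) ?_
          exact Submodule.mem_sup_left (rowSpan_mono (A * A) (by omega) hh)
        have hdj := net_dG hnet c (a + 1) (m - (c + 1) - a) (by omega)
        have hg0 : g = 0 := by
          have hmem2 : g ∈ rowSpan (m := m) 1 c ⊔ rowSpan (A * A) (m - (c + 1) - a) := by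
            rwa [sup_comm] at hgmem
          have := disjoint_iff.mp hdj ▸ (Submodule.mem_inf.mpr ⟨hg, hmem2⟩)
          simpa using this
        have hzfh : z = f + hvec := by rw [← hfw, ← hgh, hg0, zero_add]
        rw [hzfh]
        exact Submodule.add_mem _ (Submodule.mem_sup_right hf) (Submodule.mem_sup_left hh)
    have hfin := aux (m - (c + 1)) (le_refl _)
    rw [Nat.sub_self, rowSpan_zero, bot_sup_eq] at hfin
    exact hfin
  -- get y in K(c+1) outside F c
  have hKne : ¬ (rowSpan (A * A * A) (c + 1) ≤ rowSpan (m := m) 1 c) := by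
    intro hle
    have h1 : finrank (ZMod 2) (rowSpan (A * A * A) (c + 1)) = c + 1 :=
      finrank_rowSpan hA3 hc
    have h2 := Submodule.finrank_mono hle
    rw [h1, finrank_rowSpan_one (by omega : c ≤ m)] at h2
    omega
  obtain ⟨y, hyK, hyF⟩ := SetLike.not_le_iff_exists.mp hKne
  -- main inclusion
  have hsub : rowSpan (m := m) 1 (c + 1) ≤ rowSpan (A * A * A) (c + 1) := by
    intro x hx
    by_cases hxc : x ∈ rowSpan (m := m) 1 c
    · rw [← ihc] at hxc
      exact rowSpan_mono _ (Nat.le_succ c) hxc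
    · have hxy : ∀ a, a ≤ m - (c + 1) →
          x + y ∈ rowSpan (m := m) 1 c ⊔ (rowSpan A a ⊔ rowSpan (A * A) (m - (c + 1) - a)) :=
        fun a ha => hcoset a ha x y (hFU a ha x hx hxc) (hKU a ha y hyK hyF)
      have hxyF : x + y ∈ rowSpan (m := m) 1 c := hchain _ hxy
      rw [← ihc] at hxyF
      have hxyK : x + y ∈ rowSpan (A * A * A) (c + 1) :=
        rowSpan_mono _ (Nat.le_succ c) hxyF
      have hxx : x = (x + y) - y := (add_sub_cancel_right x y).symm
      rw [hxx]
      exact Submodule.sub_mem _ hxyK hyK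
  have hrk : finrank (ZMod 2) (rowSpan (A * A * A) (c + 1)) ≤
      finrank (ZMod 2) (rowSpan (m := m) 1 (c + 1)) := by
    rw [finrank_rowSpan hA3 hc, finrank_rowSpan_one hc]
  exact (Submodule.eq_of_le_of_finrank_le hsub hrk).symm

lemma flag_eq (hA : IsUnit A) : ∀ c, c ≤ m → rowSpan (A * A * A) c = rowSpan (m := m) 1 c := by
  intro c
  induction c with
  | zero => intro _; rw [rowSpan_zero, rowSpan_zero]
  | succ c ih => intro hc; exact flag_step hnet hA c hc (ih (by omega))

end Net

lemma strict_nilpotent (N : Matrix (Fin m) (Fin m) (ZMod 2))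
    (hN : ∀ i j : Fin m, N i j ≠ 0 → (j : ℕ) < (i : ℕ)) : N ^ m = 0 := by
  have key : ∀ (k : ℕ) (i j : Fin m), (N ^ k) i j ≠ 0 → (j : ℕ) + k ≤ (i : ℕ) := by
    intro k
    induction k with
    | zero =>
      intro i j h
      rw [pow_zero, Matrix.one_apply] at h
      by_cases hij : i = j
      · subst hij; omega
      · simp [hij] at h
    | succ k ihk =>
      intro i j h
      rw [pow_succ, Matrix.mul_apply] at h
      obtain ⟨l, -, hl⟩ := Finset.exists_ne_zero_of_sum_ne_zero h
      have h1 : (N ^ k) i l ≠ 0 := fun h0 => hl (by rw [h0, zero_mul])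
      have h2 : N l j ≠ 0 := fun h0 => hl (by rw [h0, mul_zero])
      have e1 := ihk i l h1
      have e2 := hN l j h2
      omega
  ext i j
  rw [Matrix.zero_apply]
  by_contra h
  have := key m i j h
  have := i.isLt
  omega

lemma matrix_add_self (B : Matrix (Fin m) (Fin m) (ZMod 2)) : B + B = 0 := by
  ext i j
  rw [Matrix.add_apply, Matrix.zero_apply]
  exact two_zero _

lemma one_add_sq (B : Matrix (Fin m) (Fin m) (ZMod 2)) : (1 + B) ^ 2 = 1 + B ^ 2 := by
  rw [pow_two, pow_two, add_mul, one_mul, mul_add, mul_one]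
  rw [show (1 + B) + (B + B * B) = 1 + ((B + B) + B * B) from by abel]
  rw [matrix_add_self, zero_add]

lemma one_add_pow_two_pow (N : Matrix (Fin m) (Fin m) (ZMod 2)) :
    ∀ k : ℕ, (1 + N) ^ (2 ^ k) = 1 + N ^ (2 ^ k) := by
  intro k
  induction k with
  | zero => simp
  | succ k ih =>
    rw [pow_succ 2 k, pow_mul, ih, one_add_sq, ← pow_mul]

end KMS

/-- **Kajiura–Matsumoto–Suzuki.** For `m ≥ 3` there is no invertible `m × m`
matrix `A` over `F_2` with maximal multiplicative order `2^m − 1` such that the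
digital net with generating matrices `(I_m, A, A²)` has `t`-value zero for
dimension `s = 3`, i.e. such that for every decomposition `d₁ + d₂ + d₃ = m`
the `m` vectors consisting of the first `d₁` rows of `I_m`, the first `d₂` rows
of `A` and the first `d₃` rows of `A²` are linearly independent over `F_2`
(equivalently, the matrix they form is nonsingular). -/
theorem no_maximal_period_tvalue_zero_dim3_F2 (m : ℕ) (hm : 3 ≤ m) :
    ¬ ∃ A : Matrix (Fin m) (Fin m) (ZMod 2), IsUnit A ∧
      orderOf A = 2 ^ m - 1 ∧
      ∀ (d₁ d₂ d₃ : ℕ) (hd : d₁ + d₂ + d₃ = m),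
        LinearIndependent (ZMod 2)
          (Sum.elim
            (fun i : Fin d₁ => (1 : Matrix (Fin m) (Fin m) (ZMod 2))
              (Fin.castLE (by omega) i))
            (Sum.elim
              (fun i : Fin d₂ => A (Fin.castLE (by omega) i))
              (fun i : Fin d₃ => (A * A) (Fin.castLE (by omega) i)))) := by

  rintro ⟨A, hA, hord, hnet⟩
  have hA3 : IsUnit (A * A * A) := (hA.mul hA).mul hA
  have flag : ∀ c, c ≤ m → KMS.rowSpan (A * A * A) c = KMS.rowSpan (m := m) 1 c :=
    KMS.flag_eq hnet hA
  -- strict lower triangularity off the diagonal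
  have hltri : ∀ i j : Fin m, (i : ℕ) < (j : ℕ) → (A * A * A) i j = 0 := by
    intro i j hij
    have h1 : (A * A * A) i ∈ KMS.rowSpan (A * A * A) ((i : ℕ) + 1) :=
      Submodule.subset_span ⟨i, by omega, rfl⟩
    rw [flag _ (by omega)] at h1
    exact KMS.mem_rowSpan_one_coord h1 j (by omega)
  -- unit diagonal
  have hdiag : ∀ i : Fin m, (A * A * A) i i = 1 := by
    intro i
    rcases KMS.zmod2_cases ((A * A * A) i i) with h0 | h1
    · exfalso
      have h1 : (A * A * A) i ∈ KMS.rowSpan (A * A * A) ((i : ℕ) + 1) :=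
        Submodule.subset_span ⟨i, by omega, rfl⟩
      rw [flag _ (by omega)] at h1
      have h2 : (A * A * A) i ∈ KMS.rowSpan (m := m) 1 (i : ℕ) :=
        KMS.mem_drop i.isLt h1 h0
      rw [← flag _ (by omega)] at h2
      rw [KMS.rowSpan_eq_map] at h2
      obtain ⟨u, hu, hueq⟩ := h2
      have heq : (A * A * A).vecMulLinear u = (A * A * A).vecMulLinear (Pi.single i 1) := by
        rw [hueq]
        simp [Matrix.vecMulLinear_apply]
        rfl
      have hueq2 : u = Pi.single i 1 := KMS.vecMulLinear_injective hA3 heq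
      rw [hueq2] at hu
      have := KMS.mem_rowSpan_one_coord hu i (le_refl _)
      rw [Pi.single_eq_same] at this
      exact one_ne_zero this
    · exact h1
  -- N := A^3 - 1 is strictly lower triangular, hence nilpotent
  have hNs : ∀ i j : Fin m, (A * A * A - 1) i j ≠ 0 → (j : ℕ) < (i : ℕ) := by
    intro i j hne
    by_contra hge
    push_neg at hge
    apply hne
    rcases eq_or_lt_of_le hge with heq | hlt
    · have hij : i = j := Fin.ext heq
      subst hij
      rw [Matrix.sub_apply, hdiag, Matrix.one_apply_eq, sub_self]
    · have hij : i ≠ j := by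
        intro h; rw [h] at hlt; omega
      rw [Matrix.sub_apply, hltri i j hlt, Matrix.one_apply_ne hij, sub_self]
  have hNm : (A * A * A - 1) ^ m = 0 := KMS.strict_nilpotent _ hNs
  have hA3N : A * A * A = 1 + (A * A * A - 1) := by abel
  have hpow : (A * A * A) ^ (2 ^ m) = 1 := by
    rw [hA3N, KMS.one_add_pow_two_pow]
    have hmle : m ≤ 2 ^ m := (Nat.lt_two_pow_self (n := m)).le
    have h2m : (A * A * A - 1) ^ (2 ^ m) = 0 := by
      rw [show 2 ^ m = m + (2 ^ m - m) from by omega, pow_add, hNm, zero_mul]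
    rw [h2m, add_zero]
  have hordvd : orderOf A ∣ 3 * 2 ^ m := by
    apply orderOf_dvd_of_pow_eq_one
    rw [pow_mul]
    have hcube : A ^ 3 = A * A * A := by
      rw [pow_succ, pow_succ, pow_one]
    rw [hcube, hpow]
  rw [hord] at hordvd
  have h1le : (1 : ℕ) ≤ 2 ^ m := Nat.one_le_two_pow
  have hcop : Nat.Coprime (2 ^ m - 1) (2 ^ m) := by
    have h2 : 2 ^ m = (2 ^ m - 1) + 1 := by omega
    rw [h2]
    exact Nat.coprime_self_add_right.mpr (Nat.coprime_one_right _)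
  have hdvd3 : (2 ^ m - 1) ∣ 3 := hcop.dvd_of_dvd_mul_right hordvd
  have hle3 : (2 ^ m - 1) ≤ 3 := Nat.le_of_dvd (by norm_num) hdvd3
  have h8 : (8 : ℕ) ≤ 2 ^ m := by
    calc (8 : ℕ) = 2 ^ 3 := by norm_num
    _ ≤ 2 ^ m := Nat.pow_le_pow_right (by norm_num) hm
  omega
end
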